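/- arXiv:math/0504509 — 8 statements merged into one kernel-verified Lean document; each statement's English description precedes it below -/
import Mathlib

section
/- Let n ≥ 1 and α ∈ (0, 1/2). Let v_1, …, v_p be linearly independent vectors of ℝⁿ, T = {t = Σ_{j=1}^p λ_j v_j : λ_j ≥ 0 for all j, ‖t‖ = 1}, T_n a finite subset of T contained in a linear subspace V_n of ℝⁿ of dimension d_n < n, and (q_t)_{t ∈ T_n} nonnegative real numbers. For f ∈ ℝⁿ and σ > 0 set Y = f + σε (ε a standard Gaussian vector in ℝⁿ) and T_α = sup_{t ∈ T_n} ( √(n − d_n) ⟨Y, t⟩ / ‖Y − Π_{V_n} Y‖ − q_t ). Let β ∈ (0, 1), and let x̄ > 0 satisfy P( ‖Y − Π_{V_n} Y‖ / √(n − d_n) > x̄ ) ≤ β/2 and z > 0 satisfy P(g > z) ≤ β/2 for g a standard normal random variable. If there exists t ∈ T_n with ⟨f, t⟩ ≥ q_t x̄ + σ z, then P(T_α > 0) ≥ 1 − β. -/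
open MeasureTheory ProbabilityTheory
open scoped RealInnerProductSpace ENNReal

section Aux

open Real
open scoped NNReal

private lemma pdf_mul_aux (a b : ℝ≥0) (ha : a ≠ 0) (hb : b ≠ 0) (z x : ℝ) :
    gaussianPDFReal 0 a x * gaussianPDFReal 0 b (z - x) =
      gaussianPDFReal 0 (a + b) z *
        gaussianPDFReal 0 (a * b / (a + b)) (x - (a : ℝ) * z / ((a : ℝ) + b)) := by
  have hA : 0 < (a : ℝ) := by positivity
  have hB : 0 < (b : ℝ) := by positivity
  have hAB : 0 < (a : ℝ) + b := by linarith
  have hc : ((a * b / (a + b) : ℝ≥0) : ℝ) = (a : ℝ) * b / ((a : ℝ) + b) := by push_cast; ring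
  unfold gaussianPDFReal
  rw [hc]
  push_cast
  rw [mul_mul_mul_comm, mul_mul_mul_comm ((√(2 * π * ((a:ℝ) + b)))⁻¹), ← Real.exp_add, ← Real.exp_add,
    ← mul_inv, ← mul_inv, ← Real.sqrt_mul (by positivity), ← Real.sqrt_mul (by positivity)]
  have hconst : 2 * π * ((a:ℝ)) * (2 * π * (b:ℝ)) = 2 * π * ((a:ℝ) + b) * (2 * π * ((a:ℝ) * b / ((a:ℝ) + b))) := by
    field_simp
  rw [hconst]
  congr 1
  have hexp : -(x - 0) ^ 2 / (2 * (a:ℝ)) + -(z - x - 0) ^ 2 / (2 * (b:ℝ)) =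
      -(z - 0) ^ 2 / (2 * ((a:ℝ) + b)) +
        -(x - (a:ℝ) * z / ((a:ℝ) + b) - 0) ^ 2 / (2 * ((a:ℝ) * b / ((a:ℝ) + b))) := by
    field_simp
    ring
  rw [hexp]

private lemma lintegral_pdf_conv_aux (a b : ℝ≥0) (ha : a ≠ 0) (hb : b ≠ 0) (z : ℝ) :
    ∫⁻ x, gaussianPDF 0 a x * gaussianPDF 0 b (z - x) = gaussianPDF 0 (a + b) z := by
  have hc : a * b / (a + b) ≠ 0 := by
    rw [ne_eq, div_eq_zero_iff]
    push_neg
    exact ⟨mul_ne_zero ha hb, by simp [ha]⟩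
  calc ∫⁻ x, gaussianPDF 0 a x * gaussianPDF 0 b (z - x)
      = ∫⁻ x, ENNReal.ofReal (gaussianPDFReal 0 (a+b) z) *
          ENNReal.ofReal (gaussianPDFReal 0 (a * b / (a + b)) (x - (a : ℝ) * z / ((a : ℝ) + b))) := by
        congr 1; ext x
        rw [gaussianPDF, gaussianPDF, ← ENNReal.ofReal_mul (gaussianPDFReal_nonneg _ _ _),
          pdf_mul_aux a b ha hb z x, ENNReal.ofReal_mul (gaussianPDFReal_nonneg _ _ _)]
    _ = ENNReal.ofReal (gaussianPDFReal 0 (a+b) z) *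
          ∫⁻ x, gaussianPDF 0 (a * b / (a + b)) (x - (a : ℝ) * z / ((a : ℝ) + b)) := by
        rw [lintegral_const_mul]
        · rfl
        · exact (measurable_gaussianPDF _ _).comp (measurable_id.sub_const _)
    _ = gaussianPDF 0 (a+b) z := by
        rw [lintegral_sub_right_eq_self (gaussianPDF 0 (a * b / (a + b))) _,
          lintegral_gaussianPDF_eq_one _ hc, mul_one]
        rfl

private lemma map_add_gaussian_aux (a b : ℝ≥0) :
    Measure.map (fun p : ℝ × ℝ => p.1 + p.2) ((gaussianReal 0 a).prod (gaussianReal 0 b)) =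
      gaussianReal 0 (a + b) := by
  by_cases ha : a = 0
  · subst ha
    rw [gaussianReal_zero_var, Measure.dirac_prod, Measure.map_map measurable_add (measurable_prodMk_left),
      zero_add]
    have : ((fun p : ℝ × ℝ => p.1 + p.2) ∘ Prod.mk (0:ℝ)) = id := by ext y; simp
    rw [this, Measure.map_id]
  by_cases hb : b = 0
  · subst hb
    rw [gaussianReal_zero_var, Measure.prod_dirac, Measure.map_map measurable_add
      (show Measurable fun x : ℝ => (x, (0:ℝ)) from measurable_id.prodMk measurable_const),
      add_zero]
    have : ((fun p : ℝ × ℝ => p.1 + p.2) ∘ (fun x : ℝ => (x, (0:ℝ)))) = id := by ext y; simp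
    rw [this, Measure.map_id]
  ext s hs
  have hmul : Measurable fun p : ℝ × ℝ => s.indicator 1 p.2 * gaussianPDF 0 b (p.2 - p.1) := by
    exact ((measurable_const.indicator hs).comp measurable_snd).mul
      ((measurable_gaussianPDF 0 b).comp (measurable_snd.sub measurable_fst))
  have key : ∀ x : ℝ, (gaussianReal 0 b) (Prod.mk x ⁻¹' ((fun p : ℝ × ℝ => p.1 + p.2) ⁻¹' s)) =
      ∫⁻ z, s.indicator 1 z * gaussianPDF 0 b (z - x) := by
    intro x
    have h1 : (Prod.mk x ⁻¹' ((fun p : ℝ × ℝ => p.1 + p.2) ⁻¹' s)) = (fun z : ℝ => x + z) ⁻¹' s := rfl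
    rw [h1, ← Measure.map_apply (measurable_const_add x) hs, gaussianReal_map_const_add x,
      zero_add, gaussianReal_apply x hb s, ← lintegral_indicator hs]
    congr 1
    ext z
    by_cases hzs : z ∈ s
    · simp only [Set.indicator_of_mem hzs, Pi.one_apply, one_mul]
      rw [gaussianPDF, gaussianPDF, gaussianPDFReal_sub, zero_add]
    · simp [Set.indicator_of_notMem hzs]
  rw [Measure.map_apply measurable_add hs,
    Measure.prod_apply (measurable_add hs)]
  calc ∫⁻ x, (gaussianReal 0 b) (Prod.mk x ⁻¹' ((fun p : ℝ × ℝ => p.1 + p.2) ⁻¹' s)) ∂(gaussianReal 0 a)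
      = ∫⁻ x, (∫⁻ z, s.indicator 1 z * gaussianPDF 0 b (z - x)) ∂(gaussianReal 0 a) := by
        simp_rw [key]
    _ = ∫⁻ x, gaussianPDF 0 a x * ∫⁻ z, s.indicator 1 z * gaussianPDF 0 b (z - x) := by
        rw [gaussianReal_of_var_ne_zero 0 ha,
          lintegral_withDensity_eq_lintegral_mul _ (measurable_gaussianPDF 0 a)
            (Measurable.lintegral_prod_right (f := fun x z => s.indicator 1 z * gaussianPDF 0 b (z - x)) hmul)]
        rfl
    _ = ∫⁻ x, ∫⁻ z, gaussianPDF 0 a x * (s.indicator 1 z * gaussianPDF 0 b (z - x)) := by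
        congr 1; ext x
        rw [lintegral_const_mul _ (show Measurable fun z : ℝ => s.indicator 1 z * gaussianPDF 0 b (z - x) from
          ((measurable_const.indicator hs)).mul ((measurable_gaussianPDF 0 b).comp (measurable_id.sub_const x)))]
    _ = ∫⁻ z, ∫⁻ x, gaussianPDF 0 a x * (s.indicator 1 z * gaussianPDF 0 b (z - x)) := by
        apply lintegral_lintegral_swap
        exact (((measurable_gaussianPDF 0 a).comp measurable_fst).mul hmul).aemeasurable
    _ = ∫⁻ z, s.indicator 1 z * ∫⁻ x, gaussianPDF 0 a x * gaussianPDF 0 b (z - x) := by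
        congr 1; ext z
        simp_rw [mul_left_comm (gaussianPDF 0 a _)]
        rw [lintegral_const_mul _ (show Measurable fun x : ℝ => gaussianPDF 0 a x * gaussianPDF 0 b (z - x) from
          (measurable_gaussianPDF 0 a).mul ((measurable_gaussianPDF 0 b).comp (measurable_const.sub measurable_id)))]
    _ = ∫⁻ z, s.indicator (gaussianPDF 0 (a + b)) z := by
        congr 1; ext z
        rw [lintegral_pdf_conv_aux a b ha hb z]
        by_cases hzs : z ∈ s <;> simp [hzs]
    _ = (gaussianReal 0 (a + b)) s := by
        rw [lintegral_indicator hs, gaussianReal_apply 0 (by simp [ha]) s]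

private lemma map_eval_pi_aux {ι : Type*} [Fintype ι] {α : ι → Type*} [∀ i, MeasurableSpace (α i)]
    (μ : ∀ i, Measure (α i)) [∀ i, IsProbabilityMeasure (μ i)] (i : ι) :
    (Measure.pi μ).map (fun x => x i) = μ i := by
  ext s hs
  classical
  rw [Measure.map_apply (measurable_pi_apply i) hs]
  have : (fun x : ∀ j, α j => x i) ⁻¹' s = Set.univ.pi (Function.update (fun j => Set.univ) i s) :=
    (Set.univ_pi_update_univ i s).symm
  rw [this, Measure.pi_pi, Fintype.prod_eq_single i
    (fun j hj => by simp [Function.update_of_ne hj]), Function.update_self]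

private lemma iIndepFun_eval_aux {ι : Type*} [Fintype ι] {α : ι → Type*} [∀ i, MeasurableSpace (α i)]
    (μ : ∀ i, Measure (α i)) [∀ i, IsProbabilityMeasure (μ i)] :
    iIndepFun (fun i (x : ∀ j, α j) => x i) (Measure.pi μ) := by
  classical
  rw [iIndepFun_iff_measure_inter_preimage_eq_mul]
  intro S sets hsets
  have h1 : (⋂ i ∈ S, (fun x : ∀ j, α j => x i) ⁻¹' sets i) =
      Set.univ.pi (fun i => if i ∈ S then sets i else Set.univ) := by
    ext x
    simp only [Set.mem_iInter, Set.mem_preimage, Set.mem_pi, Set.mem_univ, true_implies]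
    constructor
    · intro h i; split_ifs with h'
      · exact h i h'
      · trivial
    · intro h i hi; have := h i; rwa [if_pos hi] at this
  have h2 : ∀ i, Measure.pi μ ((fun x : ∀ j, α j => x i) ⁻¹' sets i) = μ i (sets i) := by
    intro i
    rw [← Set.univ_pi_update_univ i (sets i), Measure.pi_pi, Fintype.prod_eq_single i
      (fun j hj => by simp [Function.update_of_ne hj]), Function.update_self]
  rw [h1, Measure.pi_pi]
  simp_rw [h2]
  calc (∏ i, μ i (if i ∈ S then sets i else Set.univ))
      = ∏ i, (if i ∈ S then μ i (sets i) else 1) := by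
        congr 1; ext i; split_ifs <;> simp
    _ = ∏ i ∈ S, μ i (sets i) := by rw [Finset.prod_ite_mem, Finset.univ_inter]

private lemma map_sum_pi_aux {n : ℕ} (c : Fin n → ℝ) (s : Finset (Fin n)) :
    Measure.map (fun x : Fin n → ℝ => ∑ i ∈ s, c i * x i)
        (Measure.pi fun _ : Fin n => gaussianReal 0 1) =
      gaussianReal 0 ⟨∑ i ∈ s, (c i)^2, by positivity⟩ := by
  classical
  induction s using Finset.induction with
  | empty =>
      simp only [Finset.sum_empty]
      rw [show (⟨(0:ℝ), by positivity⟩ : ℝ≥0) = (0 : ℝ≥0) from rfl, gaussianReal_zero_var]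
      rw [Measure.map_const]
      simp
  | insert a s' ha ih =>
      set P : Measure (Fin n → ℝ) := Measure.pi fun _ : Fin n => gaussianReal 0 1 with hP
      have hmeas : ∀ i, Measurable fun x : Fin n → ℝ => c i * x i :=
        fun i => (measurable_pi_apply (X := fun _ => ℝ) i).const_mul (c i)
      have hiind : iIndepFun (fun i (x : Fin n → ℝ) => c i * x i) P :=
        (iIndepFun_eval_aux _).comp (fun i y => c i * y) (fun i => measurable_id.const_mul (c i))
      have hind : IndepFun (fun x : Fin n → ℝ => ∑ j ∈ s', c j * x j)
          (fun x : Fin n → ℝ => c a * x a) P := by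
        have := hiind.indepFun_finsetSum_of_notMem hmeas ha
        have hfun : (∑ j ∈ s', fun x : Fin n → ℝ => c j * x j) =
            fun x : Fin n → ℝ => ∑ j ∈ s', c j * x j := by
          ext x; simp [Finset.sum_apply]
        rwa [hfun] at this
      have hga : Measure.map (fun x : Fin n → ℝ => c a * x a) P = gaussianReal 0 ⟨(c a)^2, by positivity⟩ := by
        have h1 : (fun x : Fin n → ℝ => c a * x a) = (fun y : ℝ => c a * y) ∘ (fun x => x a) := rfl
        rw [h1, ← Measure.map_map (show Measurable fun y : ℝ => c a * y from measurable_id.const_mul (c a)) (measurable_pi_apply a),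
          map_eval_pi_aux, gaussianReal_map_const_mul (c a)]
        simp
        rfl
      have hpair : Measure.map (fun x : Fin n → ℝ => (c a * x a, ∑ j ∈ s', c j * x j)) P =
          (gaussianReal 0 ⟨(c a)^2, by positivity⟩).prod
            (gaussianReal 0 ⟨∑ i ∈ s', (c i)^2, by positivity⟩) := by
        rw [← hga, ← ih]
        exact (indepFun_iff_map_prod_eq_prod_map_map (hmeas a).aemeasurable
          (Finset.measurable_sum s' (fun i _ => hmeas i)).aemeasurable).mp hind.symm
      have hsum : (fun x : Fin n → ℝ => ∑ i ∈ insert a s', c i * x i) =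
          (fun p : ℝ × ℝ => p.1 + p.2) ∘ (fun x : Fin n → ℝ => (c a * x a, ∑ j ∈ s', c j * x j)) := by
        ext x; simp [Finset.sum_insert ha]
      rw [hsum, ← Measure.map_map measurable_add
        ((hmeas a).prodMk (Finset.measurable_sum s' (fun i _ => hmeas i))), hpair]
      erw [map_add_gaussian_aux]
      congr 1
      ext
      push_cast
      show (c a)^2 + ∑ i ∈ s', (c i)^2 = ∑ i ∈ insert a s', (c i)^2
      rw [Finset.sum_insert ha]

end Aux

/-- Theorem 1, power statement: if for some `t ∈ T_n` one has
`⟪f, t⟫ ≥ q_t x̄ + σ z`, where `x̄` is a `β/2` upper quantile of the residual scale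
estimate and `z` a `β/2` upper quantile of the standard normal distribution, then the
test rejects with probability at least `1 - β`. -/
theorem power_of_multiple_test
    {Ω : Type*} [MeasureSpace Ω] [IsProbabilityMeasure (ℙ : Measure Ω)]
    (n p dn : ℕ) (hn : 1 ≤ n) (α : ℝ) (hα0 : 0 < α) (hα : α < 1 / 2)
    (v : Fin p → EuclideanSpace ℝ (Fin n)) (hv : LinearIndependent ℝ v)
    (T : Set (EuclideanSpace ℝ (Fin n)))
    (hT : T = {t | (∃ lam : Fin p → ℝ, (∀ j, 0 ≤ lam j) ∧ t = ∑ j, lam j • v j) ∧ ‖t‖ = 1})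
    (Vn : Submodule ℝ (EuclideanSpace ℝ (Fin n)))
    (hdn : Module.finrank ℝ Vn = dn) (hdn' : dn < n)
    (Tn : Finset (EuclideanSpace ℝ (Fin n)))
    (hTnT : ↑Tn ⊆ T) (hTnV : ∀ t ∈ Tn, t ∈ Vn)
    (q : EuclideanSpace ℝ (Fin n) → ℝ) (hq : ∀ t ∈ Tn, 0 ≤ q t)
    (ε : Ω → EuclideanSpace ℝ (Fin n))
    (hε : Measure.map (fun ω i => ε ω i) ℙ = Measure.pi fun _ : Fin n => gaussianReal 0 1)
    (f : EuclideanSpace ℝ (Fin n)) (σ : ℝ) (hσ : 0 < σ)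
    (β : ℝ) (hβ0 : 0 < β) (hβ1 : β < 1)
    (xbar : ℝ) (hxbar0 : 0 < xbar)
    (hxbar : ℙ {ω | xbar <
        ‖(f + σ • ε ω) -
            (Submodule.orthogonalProjection Vn (f + σ • ε ω) : EuclideanSpace ℝ (Fin n))‖ /
          Real.sqrt ((n : ℝ) - (dn : ℝ))}
      ≤ ENNReal.ofReal (β / 2))
    (z : ℝ) (hz0 : 0 < z)
    (hz : (gaussianReal 0 1) {y | z < y} ≤ ENNReal.ofReal (β / 2))
    (ht : ∃ t ∈ Tn, q t * xbar + σ * z ≤ ⟪f, t⟫) :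
    ENNReal.ofReal (1 - β) ≤
      ℙ {ω | ∃ t ∈ Tn,
        0 < Real.sqrt ((n : ℝ) - (dn : ℝ)) * ⟪f + σ • ε ω, t⟫ /
              ‖(f + σ • ε ω) -
                  (Submodule.orthogonalProjection Vn (f + σ • ε ω) : EuclideanSpace ℝ (Fin n))‖ - q t} := by
  classical
  obtain ⟨t, htTn, htf⟩ := ht
  have htT : t ∈ T := hTnT htTn
  have htnorm : ‖t‖ = 1 := by rw [hT] at htT; exact htT.2
  -- a unit vector orthogonal to Vn
  obtain ⟨w0, hw0V, hw00⟩ : ∃ w ∈ Vnᗮ, w ≠ 0 := by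
    have hne : Vnᗮ ≠ ⊥ := by
      intro h
      rw [Submodule.orthogonal_eq_bot_iff] at h
      rw [h, finrank_top, finrank_euclideanSpace, Fintype.card_fin] at hdn
      omega
    exact Submodule.exists_mem_ne_zero_of_ne_bot hne
  set w : EuclideanSpace ℝ (Fin n) := ‖w0‖⁻¹ • w0 with hwdef
  have hwV : w ∈ Vnᗮ := Submodule.smul_mem _ _ hw0V
  have hwnorm : ‖w‖ = 1 := by
    rw [hwdef, norm_smul, norm_inv, norm_norm, inv_mul_cancel₀ (norm_ne_zero_iff.mpr hw00)]
  have hsumsq : ∀ u : EuclideanSpace ℝ (Fin n), ‖u‖ = 1 →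
      (⟨∑ i, (u i)^2, by positivity⟩ : NNReal) = 1 := by
    intro u hu
    ext
    push_cast
    calc ∑ i, (u i)^2 = ∑ i, u i * u i := by
          refine Finset.sum_congr rfl fun i _ => ?_; ring
      _ = ⟪u, u⟫ := by rw [real_inner_self_eq_norm_sq, EuclideanSpace.norm_sq_eq]; simp [sq]
      _ = 1 := by rw [real_inner_self_eq_norm_sq, hu]; norm_num
  have hεAE : AEMeasurable (fun ω i => ε ω i) ℙ := by
    apply aemeasurable_of_map_neZero
    rw [hε]
    infer_instance
  have hLmeas : ∀ u : EuclideanSpace ℝ (Fin n),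
      Measurable (fun x : Fin n → ℝ => ∑ i, u i * x i) := fun u =>
    Finset.measurable_sum Finset.univ (fun i _ => (measurable_pi_apply (X := fun _ => ℝ) i).const_mul (u i))
  have hφAE : ∀ u : EuclideanSpace ℝ (Fin n), AEMeasurable (fun ω => ∑ i, u i * ε ω i) ℙ := by
    intro u
    exact (hLmeas u).comp_aemeasurable hεAE
  have hlaw : ∀ u : EuclideanSpace ℝ (Fin n), ‖u‖ = 1 →
      Measure.map (fun ω => ∑ i, u i * ε ω i) ℙ = gaussianReal 0 1 := by
    intro u hu
    have hcomp : (fun ω => ∑ i, u i * ε ω i) =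
        (fun x : Fin n → ℝ => ∑ i, u i * x i) ∘ (fun ω i => ε ω i) := rfl
    rw [hcomp, ← AEMeasurable.map_map_of_aemeasurable ((hLmeas u).aemeasurable) hεAE, hε,
      map_sum_pi_aux (fun i => u i) Finset.univ]
    rw [show (⟨∑ i, (u i)^2, by positivity⟩ : NNReal) = 1 from hsumsq u hu]
    rfl
  have hinner : ∀ (ω : Ω) (u : EuclideanSpace ℝ (Fin n)),
      ⟪f + σ • ε ω, u⟫ = ⟪f, u⟫ + σ * ∑ i, u i * ε ω i := by
    intro ω u
    rw [inner_add_left, real_inner_smul_left]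
    congr 2
  set B1 : Set Ω := {ω | xbar <
      ‖(f + σ • ε ω) -
          (Submodule.orthogonalProjection Vn (f + σ • ε ω) : EuclideanSpace ℝ (Fin n))‖ /
        Real.sqrt ((n : ℝ) - (dn : ℝ))} with hB1def
  set B2 : Set Ω := {ω | ∑ i, t i * ε ω i ≤ -z} with hB2def
  set B3 : Set Ω := {ω | ⟪f, w⟫ + σ * ∑ i, w i * ε ω i = 0} with hB3def
  set G : Set Ω := {ω | ∃ t ∈ Tn,
      0 < Real.sqrt ((n : ℝ) - (dn : ℝ)) * ⟪f + σ • ε ω, t⟫ /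
            ‖(f + σ • ε ω) -
                (Submodule.orthogonalProjection Vn (f + σ • ε ω) : EuclideanSpace ℝ (Fin n))‖ - q t} with hGdef
  have hB2 : ℙ B2 ≤ ENNReal.ofReal (β/2) := by
    have hset : B2 = (fun ω => ∑ i, t i * ε ω i) ⁻¹' Set.Iic (-z) := rfl
    rw [hset, ← Measure.map_apply_of_aemeasurable (hφAE t) measurableSet_Iic, hlaw t htnorm]
    have hneg : Measure.map (fun y : ℝ => -y) (gaussianReal 0 1) = gaussianReal 0 1 := by
      have h := gaussianReal_map_const_mul (μ := 0) (v := 1) (-1)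
      simp only [neg_one_mul, mul_zero] at h
      rw [h]; norm_num
    have h1 : Set.Iic (-z) = (fun y : ℝ => -y) ⁻¹' Set.Ici z := by
      ext y
      simp only [Set.mem_Iic, Set.mem_preimage, Set.mem_Ici, le_neg]
    rw [h1, ← Measure.map_apply measurable_neg measurableSet_Ici, hneg]
    have h2 : Set.Ici z ⊆ {z} ∪ Set.Ioi z := by
      intro y hy
      rcases eq_or_lt_of_le (Set.mem_Ici.mp hy) with h | h
      · exact Or.inl (by simp [h.symm])
      · exact Or.inr h
    calc gaussianReal 0 1 (Set.Ici z) ≤ gaussianReal 0 1 ({z} ∪ Set.Ioi z) := measure_mono h2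
      _ ≤ gaussianReal 0 1 {z} + gaussianReal 0 1 (Set.Ioi z) := measure_union_le _ _
      _ ≤ 0 + ENNReal.ofReal (β/2) := by
          gcongr
          · exact le_of_eq ((gaussianReal_absolutelyContinuous 0 one_ne_zero) (measure_singleton z))
          · exact hz
      _ = ENNReal.ofReal (β/2) := zero_add _
  have hB3 : ℙ B3 = 0 := by
    have hset : B3 = (fun ω => ∑ i, w i * ε ω i) ⁻¹' {(-⟪f, w⟫)/σ} := by
      ext ω
      simp only [hB3def, Set.mem_setOf_eq, Set.mem_preimage, Set.mem_singleton_iff]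
      constructor
      · intro h
        rw [eq_div_iff hσ.ne']
        linarith
      · intro h
        rw [h]
        field_simp
        ring
    rw [hset, ← Measure.map_apply_of_aemeasurable (hφAE w) (measurableSet_singleton _),
      hlaw w hwnorm]
    exact (gaussianReal_absolutelyContinuous 0 one_ne_zero) (measure_singleton _)
  have hdet : ∀ ω, ω ∉ B1 → ω ∉ B2 → ω ∉ B3 → ω ∈ G := by
    intro ω h1 h2 h3
    simp only [hB1def, hB2def, hB3def, Set.mem_setOf_eq, not_lt, not_le] at h1 h2 h3
    have hsub : (0:ℝ) < (n : ℝ) - dn := by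
      have : (dn : ℝ) < n := by exact_mod_cast hdn'
      linarith
    have hsq : 0 < Real.sqrt ((n:ℝ) - dn) := Real.sqrt_pos.mpr hsub
    have hden0 : (f + σ • ε ω) -
        (Submodule.orthogonalProjection Vn (f + σ • ε ω) : EuclideanSpace ℝ (Fin n)) ≠ 0 := by
      intro h0
      apply h3
      have hpw : ⟪(Submodule.orthogonalProjection Vn (f + σ • ε ω) : EuclideanSpace ℝ (Fin n)), w⟫ = 0 :=
        hwV _ (Submodule.orthogonalProjection Vn (f + σ • ε ω)).2
      have hz0' : ⟪(f + σ • ε ω) -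
          (Submodule.orthogonalProjection Vn (f + σ • ε ω) : EuclideanSpace ℝ (Fin n)), w⟫ = 0 := by
        rw [h0, inner_zero_left]
      rw [inner_sub_left, hpw, sub_zero, hinner ω w] at hz0'
      exact hz0'
    have hden : 0 < ‖(f + σ • ε ω) -
        (Submodule.orthogonalProjection Vn (f + σ • ε ω) : EuclideanSpace ℝ (Fin n))‖ :=
      norm_pos_iff.mpr hden0
    have hYt : q t * xbar < ⟪f + σ • ε ω, t⟫ := by
      rw [hinner ω t]
      nlinarith [h2]
    refine ⟨t, htTn, ?_⟩
    rw [sub_pos, lt_div_iff₀ hden]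
    have hden_le : ‖(f + σ • ε ω) -
        (Submodule.orthogonalProjection Vn (f + σ • ε ω) : EuclideanSpace ℝ (Fin n))‖ ≤
        xbar * Real.sqrt ((n:ℝ) - dn) := by
      rw [div_le_iff₀ hsq] at h1
      linarith
    nlinarith [mul_le_mul_of_nonneg_left hden_le (hq t htTn),
      mul_lt_mul_of_pos_right hYt hsq]
  have hGc : Gᶜ ⊆ B1 ∪ B2 ∪ B3 := by
    intro ω hω
    by_contra hB
    simp only [Set.mem_union, not_or] at hB
    exact hω (hdet ω hB.1.1 hB.1.2 hB.2)
  have hGcle : ℙ Gᶜ ≤ ENNReal.ofReal β := by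
    calc ℙ Gᶜ ≤ ℙ (B1 ∪ B2 ∪ B3) := measure_mono hGc
      _ ≤ ℙ (B1 ∪ B2) + ℙ B3 := measure_union_le _ _
      _ ≤ ℙ B1 + ℙ B2 + ℙ B3 := by gcongr; exact measure_union_le _ _
      _ ≤ ENNReal.ofReal (β/2) + ENNReal.ofReal (β/2) + 0 :=
          add_le_add (add_le_add hxbar hB2) hB3.le
      _ = ENNReal.ofReal β := by
          rw [add_zero, ← ENNReal.ofReal_add (by linarith) (by linarith)]
          norm_num
  have huniv : (1:ℝ≥0∞) ≤ ℙ G + ℙ Gᶜ := by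
    rw [← measure_univ (μ := (ℙ : Measure Ω)), ← Set.union_compl_self G]
    exact measure_union_le _ _
  rw [ENNReal.ofReal_sub _ hβ0.le, ENNReal.ofReal_one]
  refine tsub_le_iff_right.mpr ?_
  calc (1:ℝ≥0∞) ≤ ℙ G + ℙ Gᶜ := huniv
    _ ≤ ℙ G + ENNReal.ofReal β := by gcongr
end

section
/- Let r ≥ 1 be an integer, let R : [0, 1] → ℝ, and let F : [0, 1] → ℝ be such that the product RF is r times differentiable on [0, 1] with (RF)^{(r)}(x) ≥ 0 for all x ∈ [0, 1]. Let 0 ≤ x_1 < x_2 < ⋯ < x_n ≤ 1 and let w ∈ ℝⁿ be defined by w_i = R(x_i) F(x_i). Then for every increasing tuple i = (i_1, …, i_{r+1}) of indices in {1, …, n}, φ_i(w) ≥ 0; in particular, for every i ∈ {1, …, n − r}, the determinant φ_{(i, i+1, …, i+r)}(w) is nonnegative. -/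
/-- One step of Rolle's theorem: from `m+2` zeros of `f` get `m+1` zeros of `f'`. -/
private lemma rolle_step {m : ℕ} (f f' : ℝ → ℝ)
    (hc : ContinuousOn f (Set.Icc (0:ℝ) 1))
    (hd : ∀ x ∈ Set.Ioo (0:ℝ) 1, HasDerivAt f (f' x) x)
    (u : Fin (m + 2) → ℝ) (hu : StrictMono u) (hu01 : ∀ j, u j ∈ Set.Icc (0:ℝ) 1)
    (hz : ∀ j, f (u j) = 0) :
    ∃ v : Fin (m + 1) → ℝ, StrictMono v ∧ (∀ j, v j ∈ Set.Icc (0:ℝ) 1) ∧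
      ∀ j, f' (v j) = 0 := by
  have key : ∀ j : Fin (m + 1), ∃ c ∈ Set.Ioo (u j.castSucc) (u j.succ), f' c = 0 := by
    intro j
    have hab : u j.castSucc < u j.succ := hu (Fin.castSucc_lt_succ : j.castSucc < j.succ)
    have hsub : Set.Icc (u j.castSucc) (u j.succ) ⊆ Set.Icc (0:ℝ) 1 :=
      Set.Icc_subset_Icc (hu01 _).1 (hu01 _).2
    obtain ⟨c, hc1, hc2⟩ := exists_deriv_eq_zero hab (hc.mono hsub) (by rw [hz, hz])
    refine ⟨c, hc1, ?_⟩
    have hcI : c ∈ Set.Ioo (0:ℝ) 1 := ⟨lt_of_le_of_lt (hu01 j.castSucc).1 hc1.1,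
      lt_of_lt_of_le hc1.2 (hu01 j.succ).2⟩
    rw [← (hd c hcI).deriv]; exact hc2
  choose v hv hv0 using key
  have hv01 : ∀ j, v j ∈ Set.Icc (0:ℝ) 1 := fun j =>
    ⟨le_of_lt (lt_of_le_of_lt (hu01 j.castSucc).1 (hv j).1),
     le_of_lt (lt_of_lt_of_le (hv j).2 (hu01 j.succ).2)⟩
  refine ⟨v, ?_, hv01, hv0⟩
  rw [Fin.strictMono_iff_lt_succ]
  intro i
  have heq : i.castSucc.succ = i.succ.castSucc := by ext; simp
  calc v i.castSucc < u i.castSucc.succ := (hv i.castSucc).2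
    _ = u i.succ.castSucc := by rw [heq]
    _ < v i.succ := (hv i.succ).1

/-- Iterated Rolle: a chain of derivatives with `r+1` zeros of the bottom function
yields a zero of the `r`-th function. -/
private lemma iter_rolle (r : ℕ) (G : ℕ → ℝ → ℝ)
    (hc : ∀ k < r, ContinuousOn (G k) (Set.Icc (0:ℝ) 1))
    (hd : ∀ k < r, ∀ x ∈ Set.Ioo (0:ℝ) 1, HasDerivAt (G k) (G (k+1) x) x)
    (u : Fin (r + 1) → ℝ) (hu : StrictMono u) (hu01 : ∀ j, u j ∈ Set.Icc (0:ℝ) 1)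
    (hz : ∀ j, G 0 (u j) = 0) :
    ∃ ξ ∈ Set.Icc (0:ℝ) 1, G r ξ = 0 := by
  induction r generalizing G with
  | zero => exact ⟨u 0, hu01 0, hz 0⟩
  | succ r ih =>
    obtain ⟨v, hv, hv01, hv0⟩ := rolle_step (G 0) (G 1) (hc 0 (Nat.succ_pos r))
      (hd 0 (Nat.succ_pos r)) u hu hu01 hz
    exact ih (fun k => G (k + 1)) (fun k hk => hc (k + 1) (by omega))
      (fun k hk => hd (k + 1) (by omega)) v hv hv01 hv0

/-- Key lemma: nonnegativity of the determinant for a function `g` with nonnegative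
`r`-th derivative on `[0,1]`, at strictly increasing nodes. -/
private lemma key_det (r : ℕ) (hr : 1 ≤ r) (g : ℝ → ℝ)
    (hdiff : ∀ k < r, DifferentiableOn ℝ
      (iteratedDerivWithin k g (Set.Icc (0:ℝ) 1)) (Set.Icc (0:ℝ) 1))
    (hpos : ∀ y ∈ Set.Icc (0:ℝ) 1, 0 ≤ iteratedDerivWithin r g (Set.Icc (0:ℝ) 1) y)
    (t : Fin (r + 1) → ℝ) (ht : StrictMono t) (ht01 : ∀ j, t j ∈ Set.Icc (0:ℝ) 1) :
    0 ≤ Matrix.det (Matrix.of fun k l : Fin (r + 1) =>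
      if (l : ℕ) = r then g (t k) else t k ^ (l : ℕ)) := by
  classical
  have htinj : Set.InjOn t ↑(Finset.univ : Finset (Fin (r + 1))) :=
    fun a _ b _ h => ht.injective h
  set p : Polynomial ℝ := (Lagrange.interpolate Finset.univ t) (fun i => g (t i)) with hp
  have hdeg : p.natDegree ≤ r := by
    by_cases h0 : p = 0
    · simp [h0]
    · have hlt := Lagrange.degree_interpolate_lt (s := Finset.univ) (v := t)
        (fun i => g (t i)) htinj
      rw [Finset.card_univ, Fintype.card_fin, ← hp] at hlt
      have := (Polynomial.natDegree_lt_iff_degree_lt h0).mpr hlt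
      omega
  have hcoeff : 0 ≤ p.coeff r := by
    have hus : UniqueDiffOn ℝ (Set.Icc (0:ℝ) 1) := uniqueDiffOn_Icc one_pos
    set G : ℕ → ℝ → ℝ := fun k x => iteratedDerivWithin k g (Set.Icc (0:ℝ) 1) x
      - ((⇑Polynomial.derivative)^[k] p).eval x with hG
    have hc : ∀ k < r, ContinuousOn (G k) (Set.Icc (0:ℝ) 1) := fun k hk =>
      ((hdiff k hk).continuousOn).sub (Polynomial.continuousOn _)
    have hd : ∀ k < r, ∀ x ∈ Set.Ioo (0:ℝ) 1, HasDerivAt (G k) (G (k + 1) x) x := by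
      intro k hk x hx
      have hxmem : x ∈ Set.Icc (0:ℝ) 1 := Set.mem_Icc_of_Ioo hx
      have hxs : Set.Icc (0:ℝ) 1 ∈ nhds x := Icc_mem_nhds hx.1 hx.2
      have h1 : HasDerivAt (fun y => iteratedDerivWithin k g (Set.Icc (0:ℝ) 1) y)
          (iteratedDerivWithin (k + 1) g (Set.Icc (0:ℝ) 1) x) x := by
        rw [iteratedDerivWithin_succ]
        exact (((hdiff k hk) x hxmem).hasDerivWithinAt).hasDerivAt hxs
      have h2 : HasDerivAt (fun y => ((⇑Polynomial.derivative)^[k] p).eval y)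
          (((⇑Polynomial.derivative)^[k + 1] p).eval x) x := by
        rw [Function.iterate_succ_apply']
        exact Polynomial.hasDerivAt _ x
      exact h1.sub h2
    have hz : ∀ j, G 0 (t j) = 0 := by
      intro j
      simp only [hG, iteratedDerivWithin_zero, Function.iterate_zero, id_eq]
      rw [hp, Lagrange.eval_interpolate_at_node _ htinj (Finset.mem_univ j), sub_self]
    obtain ⟨ξ, hξ, hξ0⟩ := iter_rolle r G hc hd t ht ht01 hz
    have h1 : iteratedDerivWithin r g (Set.Icc (0:ℝ) 1) ξ
        = ((⇑Polynomial.derivative)^[r] p).eval ξ := sub_eq_zero.mp hξ0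
    have hconst : ((⇑Polynomial.derivative)^[r] p)
        = Polynomial.C ((r.factorial : ℝ) * p.coeff r) := by
      have hd0 : ((⇑Polynomial.derivative)^[r] p).natDegree ≤ 0 :=
        le_trans (Polynomial.natDegree_iterate_derivative p r) (by omega)
      rw [Polynomial.eq_C_of_natDegree_le_zero hd0]
      congr 1
      rw [Polynomial.coeff_iterate_derivative]
      simp [Nat.descFactorial_self, nsmul_eq_mul]
    have hge := hpos ξ hξ
    rw [h1, hconst, Polynomial.eval_C] at hge
    have hfac : (0:ℝ) < (r.factorial : ℝ) := by
      exact_mod_cast Nat.factorial_pos r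
    exact (mul_nonneg_iff_of_pos_left hfac).mp hge
  have hM : (Matrix.of fun k l : Fin (r + 1) =>
        if (l : ℕ) = r then g (t k) else t k ^ (l : ℕ))
      = (Matrix.vandermonde t) * (Matrix.of fun m l : Fin (r + 1) =>
          if (l : ℕ) = r then p.coeff (m : ℕ) else if m = l then 1 else 0) := by
    ext k l
    rw [Matrix.mul_apply]
    simp only [Matrix.of_apply, Matrix.vandermonde_apply]
    by_cases hl : (l : ℕ) = r
    · simp only [hl, if_pos rfl, if_true]
      have hgt : Polynomial.eval (t k) p = g (t k) := by
        rw [hp]; exact Lagrange.eval_interpolate_at_node _ htinj (Finset.mem_univ k)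
      rw [← hgt, Polynomial.eval_eq_sum_range' (Nat.lt_succ_of_le hdeg),
        ← Fin.sum_univ_eq_sum_range (fun i => p.coeff i * t k ^ i) (r + 1)]
      exact Finset.sum_congr rfl (fun m _ => mul_comm _ _)
    · simp only [hl, if_false, if_neg hl, mul_ite, mul_one, mul_zero]
      rw [Finset.sum_ite_eq' Finset.univ l (fun m => t k ^ (m : ℕ))]
      simp
  rw [hM, Matrix.det_mul, Matrix.det_vandermonde]
  have hC : (Matrix.of fun m l : Fin (r + 1) =>
      if (l : ℕ) = r then p.coeff (m : ℕ) else if m = l then 1 else 0).det = p.coeff r := by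
    rw [Matrix.det_of_upperTriangular]
    · rw [Finset.prod_eq_single (Fin.last r)]
      · simp [Fin.val_last]
      · intro b _ hb
        have hbr : (b : ℕ) ≠ r := fun h => hb (Fin.ext (by simpa using h))
        simp [hbr]
      · simp
    · intro i j hij
      have hji : (j : ℕ) < (i : ℕ) := hij
      have h1 : (j : ℕ) ≠ r := by have := i.isLt; omega
      have h2 : i ≠ j := fun h => by simp [h] at hji
      simp only [Matrix.of_apply, if_neg h1, if_neg h2]
  rw [hC]
  refine mul_nonneg (le_of_lt ?_) hcoeff
  refine Finset.prod_pos fun i _ => Finset.prod_pos fun j hj => ?_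
  exact sub_pos.mpr (ht (Finset.mem_Ioi.mp hj))

/-- The determinant `φ_i(v)` of the `(r+1) × (r+1)` matrix whose `k`-th row is
`(1, x_{i_k}, x_{i_k}², …, x_{i_k}^{r-1}, v_{i_k})`. -/
noncomputable def phiDet {n : ℕ} (r : ℕ) (x v : Fin n → ℝ) (idx : Fin (r + 1) → Fin n) : ℝ :=
  Matrix.det (Matrix.of fun k l : Fin (r + 1) =>
    if (l : ℕ) = r then v (idx k) else x (idx k) ^ (l : ℕ))

/-- Proposition 4, case of `K_{r,R}`: if `(d^r/dx^r)[R(x)F(x)] ≥ 0` on `[0,1]`, then all the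
determinants `φ_i(R ⋆ f)` at increasing `(r+1)`-tuples of design points are nonnegative; in
particular those at consecutive tuples are. -/
theorem phiDet_nonneg_of_diff_ineq
    (n r : ℕ) (hr : 1 ≤ r) (R F : ℝ → ℝ)
    (hdiff : ∀ k < r, DifferentiableOn ℝ
      (iteratedDerivWithin k (fun y => R y * F y) (Set.Icc (0 : ℝ) 1)) (Set.Icc (0 : ℝ) 1))
    (hpos : ∀ y ∈ Set.Icc (0 : ℝ) 1,
      0 ≤ iteratedDerivWithin r (fun y => R y * F y) (Set.Icc (0 : ℝ) 1) y)
    (x : Fin n → ℝ) (hx : StrictMono x) (hx01 : ∀ i, x i ∈ Set.Icc (0 : ℝ) 1)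
    (w : Fin n → ℝ) (hw : ∀ i, w i = R (x i) * F (x i)) :
    (∀ idx : Fin (r + 1) → Fin n, StrictMono idx → 0 ≤ phiDet r x w idx)
    ∧ ∀ i : ℕ, ∀ hi : i + r < n,
        0 ≤ phiDet r x w fun k => ⟨i + (k : ℕ), by have := k.isLt; omega⟩ := by
  have main : ∀ idx : Fin (r + 1) → Fin n, StrictMono idx → 0 ≤ phiDet r x w idx := by
    intro idx hidx
    have hkey := key_det r hr (fun y => R y * F y) hdiff hpos
      (fun k => x (idx k)) (hx.comp hidx) (fun j => hx01 _)
    unfold phiDet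
    have hEq : (Matrix.of fun k l : Fin (r + 1) =>
        if (l : ℕ) = r then w (idx k) else x (idx k) ^ (l : ℕ))
        = (Matrix.of fun k l : Fin (r + 1) =>
        if (l : ℕ) = r then (fun y => R y * F y) (x (idx k))
        else (fun k : Fin (r + 1) => x (idx k)) k ^ (l : ℕ)) := by
      ext k l
      simp only [Matrix.of_apply, hw]
    rw [hEq]
    exact hkey
  refine ⟨main, fun i hi => main _ ?_⟩
  intro a b hab
  simp only [Fin.mk_lt_mk]
  exact Nat.add_lt_add_left hab i
end

section
/- Let 1 ≤ q < k be integers, let w¹, …, w^q be linearly independent vectors of ℝ^k spanning the subspace W, and let u, v ∈ ℝ^k. Then Gram(w¹, …, w^q) · ⟨u, v − Π_W v⟩ = Σ_i det A_u(i) · det A_v(i), where the sum ranges over all increasing tuples i = (i_1, …, i_{q+1}) with 1 ≤ i_1 < ⋯ < i_{q+1} ≤ k, and for z ∈ ℝ^k, A_z(i) denotes the (q+1)×(q+1) matrix whose l-th row is (w¹_{i_l}, …, w^q_{i_l}, z_{i_l}). -/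
open scoped RealInnerProductSpace


open Finset Matrix Equiv

theorem my_cauchy_binet {R : Type*} [CommRing R] (n k : ℕ)
    (A : Matrix (Fin n) (Fin k) R) (B : Matrix (Fin k) (Fin n) R) :
    (A * B).det = ∑ s : {s : Finset (Fin k) // s.card = n},
      (A.submatrix id (fun i => (s.1.orderIsoOfFin s.2 i : Fin k))).det *
      (B.submatrix (fun i => (s.1.orderIsoOfFin s.2 i : Fin k)) id).det := by
  have step1 : (A * B).det
      = ∑ p : Fin n → Fin k, (A.submatrix id p).det * ∏ i, B (p i) i := by
    calc (A * B).det
        = ∑ σ : Equiv.Perm (Fin n), ((Equiv.Perm.sign σ : ℤ) : R)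
            * ∏ i, ∑ j, A (σ i) j * B j i := by
          rw [det_apply']; simp [mul_apply]
      _ = ∑ σ : Equiv.Perm (Fin n), ∑ p : Fin n → Fin k,
            ((Equiv.Perm.sign σ : ℤ) : R) * ∏ i, A (σ i) (p i) * B (p i) i := by
          simp only [prod_univ_sum, mul_sum, Fintype.piFinset_univ]
      _ = ∑ p : Fin n → Fin k, ∑ σ : Equiv.Perm (Fin n),
            ((Equiv.Perm.sign σ : ℤ) : R) * ∏ i, A (σ i) (p i) * B (p i) i :=
          Finset.sum_comm
      _ = ∑ p : Fin n → Fin k, (A.submatrix id p).det * ∏ i, B (p i) i := by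
          refine Finset.sum_congr rfl fun p _ => ?_
          rw [det_apply', Finset.sum_mul]
          refine Finset.sum_congr rfl fun σ _ => ?_
          simp only [submatrix_apply, id_eq, prod_mul_distrib]
          ring
  rw [step1]
  have step2 : ∑ p : Fin n → Fin k, (A.submatrix id p).det * ∏ i, B (p i) i
      = ∑ p ∈ Finset.univ.filter (fun p : Fin n → Fin k => Function.Injective p),
          (A.submatrix id p).det * ∏ i, B (p i) i := by
    symm
    apply Finset.sum_subset (Finset.filter_subset _ _)
    intro p _ hp
    simp only [Finset.mem_filter, Finset.mem_univ, true_and] at hp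
    rw [Function.not_injective_iff] at hp
    obtain ⟨i, j, hpij, hij⟩ := hp
    have hz : (A.submatrix id p).det = 0 :=
      Matrix.det_zero_of_column_eq hij (fun l => by simp [hpij])
    rw [hz, zero_mul]
  rw [step2]
  have step3 : ∑ p ∈ Finset.univ.filter (fun p : Fin n → Fin k => Function.Injective p),
          (A.submatrix id p).det * ∏ i, B (p i) i
      = ∑ x : {s : Finset (Fin k) // s.card = n} × Equiv.Perm (Fin n),
          (A.submatrix id fun i => ((x.1.1.orderIsoOfFin x.1.2) (x.2 i) : Fin k)).det
            * ∏ i, B ((x.1.1.orderIsoOfFin x.1.2) (x.2 i) : Fin k) i := by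
    refine (Finset.sum_bij
      (i := fun (x : {s : Finset (Fin k) // s.card = n} × Equiv.Perm (Fin n)) _ =>
        fun i => ((x.1.1.orderIsoOfFin x.1.2) (x.2 i) : Fin k))
      ?_ ?_ ?_ ?_).symm
    · intro x _
      simp only [Finset.mem_filter, Finset.mem_univ, true_and]
      intro a b hab
      exact x.2.injective ((x.1.1.orderIsoOfFin x.1.2).injective (Subtype.ext hab))
    · rintro ⟨⟨s, hs⟩, σ⟩ _ ⟨⟨t, ht⟩, τ⟩ _ hfe
      dsimp only at hfe
      have hst : s = t := by
        have h1 : Finset.image (fun i => ((Finset.orderIsoOfFin s hs) (σ i) : Fin k))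
            Finset.univ = s := by
          ext x
          simp only [Finset.mem_image, Finset.mem_univ, true_and]
          constructor
          · rintro ⟨i, rfl⟩; exact ((Finset.orderIsoOfFin s hs) (σ i)).2
          · intro hx
            exact ⟨σ.symm ((Finset.orderIsoOfFin s hs).symm ⟨x, hx⟩), by simp⟩
        have h2 : Finset.image (fun i => ((Finset.orderIsoOfFin t ht) (τ i) : Fin k))
            Finset.univ = t := by
          ext x
          simp only [Finset.mem_image, Finset.mem_univ, true_and]
          constructor
          · rintro ⟨i, rfl⟩; exact ((Finset.orderIsoOfFin t ht) (τ i)).2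
          · intro hx
            exact ⟨τ.symm ((Finset.orderIsoOfFin t ht).symm ⟨x, hx⟩), by simp⟩
        rw [← h1, ← h2, hfe]
      subst hst
      have hστ : σ = τ := by
        ext i
        have h3 := congrFun hfe i
        exact congrArg Fin.val ((Finset.orderIsoOfFin s hs).injective (Subtype.ext h3))
      simp [hστ]
    · intro p hp
      simp only [Finset.mem_filter, Finset.mem_univ, true_and] at hp
      set s : Finset (Fin k) := Finset.image p Finset.univ with hsdef
      have hcard : s.card = n := by
        rw [hsdef, Finset.card_image_of_injective _ hp, Finset.card_univ, Fintype.card_fin]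
      have hmem : ∀ i, p i ∈ s := fun i => Finset.mem_image_of_mem p (Finset.mem_univ i)
      set σ0 : Fin n → Fin n := fun i => (Finset.orderIsoOfFin s hcard).symm ⟨p i, hmem i⟩
        with hσ0def
      have hσ0 : Function.Injective σ0 := by
        intro a b hab
        apply hp
        have h4 := congrArg (fun x => ((Finset.orderIsoOfFin s hcard) x : Fin k)) hab
        simpa [hσ0def] using h4
      have hσ0b : Function.Bijective σ0 := (Finite.injective_iff_bijective).mp hσ0
      refine ⟨⟨⟨s, hcard⟩, Equiv.ofBijective σ0 hσ0b⟩, Finset.mem_univ _, ?_⟩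
      funext i
      show ((Finset.orderIsoOfFin s hcard) (σ0 i) : Fin k) = p i
      simp [hσ0def]
    · intros a ha
      rfl
  rw [step3, Fintype.sum_prod_type]
  refine Finset.sum_congr rfl fun s _ => ?_
  have hA : ∀ σ : Equiv.Perm (Fin n),
      (A.submatrix id fun i => ((s.1.orderIsoOfFin s.2) (σ i) : Fin k)).det
        = ((Equiv.Perm.sign σ : ℤ) : R)
            * (A.submatrix id fun i => ((s.1.orderIsoOfFin s.2) i : Fin k)).det := by
    intro σ
    have h5 : (A.submatrix id fun i => ((s.1.orderIsoOfFin s.2) (σ i) : Fin k))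
        = (A.submatrix id fun i => ((s.1.orderIsoOfFin s.2) i : Fin k)).submatrix id σ := by
      ext a b; simp
    rw [h5, Matrix.det_permute']
    try norm_cast
  rw [Matrix.det_apply' (M := B.submatrix (fun i => ((s.1.orderIsoOfFin s.2) i : Fin k)) id),
    Finset.mul_sum]
  refine Finset.sum_congr rfl fun σ _ => ?_
  rw [hA σ]
  simp only [Matrix.submatrix_apply, id_eq]
  ring

/-- Claim 2 (identity (74)) of the Appendix, proved via the Cauchy–Binet formula:
`Gram(w¹, …, w^q) · ⟨u, v − Π_W v⟩` equals the sum over all increasing `(q+1)`-tuples of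
indices of products of the two bordered determinants. -/
theorem gram_mul_inner_sub_proj_eq_sum_det
    (k q : ℕ) (hq : 1 ≤ q) (hqk : q < k)
    (w : Fin q → EuclideanSpace ℝ (Fin k)) (hw : LinearIndependent ℝ w)
    (u v : EuclideanSpace ℝ (Fin k)) :
    Matrix.det (Matrix.of fun a b : Fin q => ⟪w a, w b⟫)
        * ⟪u, v - (Submodule.orthogonalProjectionOnto (Submodule.span ℝ (Set.range w)) v :
            EuclideanSpace ℝ (Fin k))⟫
      = ∑ s : {s : Finset (Fin k) // s.card = q + 1},
          Matrix.det (Matrix.of fun l m : Fin (q + 1) =>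
            if h : (m : ℕ) < q then w ⟨m, h⟩ (s.1.orderIsoOfFin s.2 l : Fin k)
            else u (s.1.orderIsoOfFin s.2 l : Fin k))
          * Matrix.det (Matrix.of fun l m : Fin (q + 1) =>
            if h : (m : ℕ) < q then w ⟨m, h⟩ (s.1.orderIsoOfFin s.2 l : Fin k)
            else v (s.1.orderIsoOfFin s.2 l : Fin k)) := by
  classical
  set W := Submodule.span ℝ (Set.range w) with hW
  set P : EuclideanSpace ℝ (Fin k) := (Submodule.orthogonalProjectionOnto W v : EuclideanSpace ℝ (Fin k))
    with hP
  set v' : EuclideanSpace ℝ (Fin k) := v - P with hv'def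
  set fu : Fin (q + 1) → EuclideanSpace ℝ (Fin k) :=
    fun m => if h : (m : ℕ) < q then w ⟨m, h⟩ else u with hfu
  set fv : Fin (q + 1) → EuclideanSpace ℝ (Fin k) :=
    fun m => if h : (m : ℕ) < q then w ⟨m, h⟩ else v with hfv
  set Mu : Matrix (Fin k) (Fin (q + 1)) ℝ := fun i m => fu m i with hMu
  set Mv : Matrix (Fin k) (Fin (q + 1)) ℝ := fun i m => fv m i with hMv
  set G : Matrix (Fin (q + 1)) (Fin (q + 1)) ℝ :=
    Matrix.of fun l m => ⟪fu l, fv m⟫ with hG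
  -- G = Muᵀ * Mv
  have hGmul : G = Mu.transpose * Mv := by
    ext l m
    simp only [hG, Matrix.of_apply, Matrix.mul_apply, Matrix.transpose_apply, hMu, hMv]
    rw [PiLp.inner_apply]
    simp [RCLike.inner_apply]
    exact Finset.sum_congr rfl fun _ _ => mul_comm _ _
  -- RHS via Cauchy-Binet
  have hRHS : G.det = ∑ s : {s : Finset (Fin k) // s.card = q + 1},
          Matrix.det (Matrix.of fun l m : Fin (q + 1) =>
            if h : (m : ℕ) < q then w ⟨m, h⟩ (s.1.orderIsoOfFin s.2 l : Fin k)
            else u (s.1.orderIsoOfFin s.2 l : Fin k))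
          * Matrix.det (Matrix.of fun l m : Fin (q + 1) =>
            if h : (m : ℕ) < q then w ⟨m, h⟩ (s.1.orderIsoOfFin s.2 l : Fin k)
            else v (s.1.orderIsoOfFin s.2 l : Fin k)) := by
    rw [hGmul, my_cauchy_binet]
    refine Finset.sum_congr rfl fun s _ => ?_
    congr 1
    · rw [← Matrix.det_transpose]
      congr 1
      ext l m
      simp only [Matrix.transpose_apply, Matrix.submatrix_apply, Matrix.transpose_apply,
        Matrix.of_apply, id_eq, hMu, hfu]
      split <;> simp [*, Matrix.transpose, Matrix.submatrix]
    · congr 1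
      ext l m
      simp only [Matrix.submatrix_apply, Matrix.of_apply, id_eq, hMv, hfv]
      split <;> simp [*, Matrix.transpose, Matrix.submatrix]
  -- LHS: det G = Gram * ⟪u, v'⟫
  have hv'orth : ∀ x ∈ W, ⟪x, v'⟫ = 0 := by
    intro x hx
    have h := Submodule.sub_starProjection_mem_orthogonal (K := W) v
    exact (Submodule.mem_orthogonal W v').mp h x hx
  have hwW : ∀ a : Fin q, w a ∈ W := fun a =>
    Submodule.subset_span (Set.mem_range_self a)
  have hPW : P ∈ W := (Submodule.orthogonalProjectionOnto W v).2
  obtain ⟨c, hc⟩ : ∃ c : Fin q → ℝ, ∑ a, c a • w a = P := by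
    rwa [← Submodule.mem_span_range_iff_exists_fun]
  set lastq : Fin (q + 1) := Fin.last q with hlast
  have hlastq : ¬ ((lastq : ℕ) < q) := by simp [hlast]
  set col1 : Fin (q + 1) → ℝ := fun l => ⟪fu l, v'⟫ with hcol1
  have hsplit : G = (G.updateCol lastq (col1 + fun l => ⟪fu l, P⟫)) := by
    ext l m
    rw [Matrix.updateCol_apply]
    split
    · next hm =>
      subst hm
      simp only [hG, Matrix.of_apply, hcol1, Pi.add_apply]
      rw [← inner_add_right]
      have hfvl : fv lastq = v' + P := by
        simp only [hfv, hlastq, dif_neg, not_false_iff, hv'def]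
        abel
      rw [hfvl]
    · rfl
  have hdet2 : (G.updateCol lastq fun l => ⟪fu l, P⟫).det = 0 := by
    set c' : Fin (q + 1) → ℝ := fun m => if h : (m : ℕ) < q then c ⟨m, h⟩ else 0 with hc'
    have hcol : (fun l => ⟪fu l, P⟫) = fun l => ∑ m, c' m • G l m := by
      funext l
      rw [← hc, inner_sum]
      rw [Fin.sum_univ_castSucc (f := fun m => c' m • G l m)]
      have hzero : c' lastq • G l lastq = 0 := by
        simp [hc', hlastq]
      rw [hzero, add_zero]
      refine Finset.sum_congr rfl fun a _ => ?_
      have ha : ((Fin.castSucc a : Fin (q+1)) : ℕ) < q := a.2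
      simp only [hc', ha, dif_pos, hG, Matrix.of_apply, hfv, smul_eq_mul]
      rw [real_inner_smul_right]
      congr 2
    rw [hcol, Matrix.det_updateCol_sum]
    simp [hc', hlastq]
  have hdet1 : (G.updateCol lastq col1).det
      = (Matrix.det (Matrix.of fun a b : Fin q => ⟪w a, w b⟫)) * ⟪u, v'⟫ := by
    set G' := G.updateCol lastq col1 with hG'
    rw [← Matrix.det_submatrix_equiv_self (finSumFinEquiv (m := q) (n := 1)) G']
    have hblocks : G'.submatrix finSumFinEquiv finSumFinEquiv
        = Matrix.fromBlocks (Matrix.of fun a b : Fin q => ⟪w a, w b⟫) 0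
            (Matrix.of fun (_ : Fin 1) (b : Fin q) => ⟪u, w b⟫)
            (Matrix.of fun (_ _ : Fin 1) => ⟪u, v'⟫) := by
      ext i j
      have hcast : ∀ a : Fin q, (finSumFinEquiv (Sum.inl a) : Fin (q+1)) = Fin.castSucc a := by
        intro a; rfl
      have hinr : ∀ b : Fin 1, (finSumFinEquiv (Sum.inr b) : Fin (q+1)) = lastq := by
        intro b
        apply Fin.ext
        simp [hlast, Fin.ext_iff, Subsingleton.elim b 0]
      rcases i with a | a <;> rcases j with b | b
      · have hb : ((Fin.castSucc b : Fin (q+1)) : ℕ) < q := b.2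
        have hbne : Fin.castSucc b ≠ lastq := by
          simp [Fin.ext_iff, hlast]; omega
        simp only [Matrix.submatrix_apply, hcast, Matrix.fromBlocks_apply₁₁, hG',
          Matrix.updateCol_apply, if_neg hbne, hG, Matrix.of_apply]
        have ha' : ((Fin.castSucc a : Fin (q+1)) : ℕ) < q := a.2
        simp [hfu, hfv, ha', hb]
      · -- top-right : zero
        simp only [Matrix.submatrix_apply, hcast, hinr, Matrix.fromBlocks_apply₁₂, hG',
          Matrix.updateCol_apply, if_pos rfl, hcol1]
        have ha' : ((Fin.castSucc a : Fin (q+1)) : ℕ) < q := a.2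
        have : fu (Fin.castSucc a) = w ⟨a, a.2⟩ := by simp [hfu, ha']
        rw [this]
        simp [hv'orth _ (hwW _)]
      · have hbne : Fin.castSucc b ≠ lastq := by
          simp [Fin.ext_iff, hlast]; omega
        have hb : ((Fin.castSucc b : Fin (q+1)) : ℕ) < q := b.2
        simp only [Matrix.submatrix_apply, hcast, hinr, Matrix.fromBlocks_apply₂₁, hG',
          Matrix.updateCol_apply, if_neg hbne, hG, Matrix.of_apply]
        simp [hfu, hfv, hlastq, hb]
      · simp only [Matrix.submatrix_apply, hinr, Matrix.fromBlocks_apply₂₂, hG',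
          Matrix.updateCol_apply, if_pos rfl, hcol1, Matrix.of_apply]
        simp [hfu, hlastq]
    rw [hblocks, Matrix.det_fromBlocks_zero₁₂]
    congr 1
    simp [Matrix.det_fin_one]
  calc Matrix.det (Matrix.of fun a b : Fin q => ⟪w a, w b⟫) * ⟪u, v - P⟫
      = (G.updateCol lastq col1).det + (G.updateCol lastq fun l => ⟪fu l, P⟫).det := by
        rw [hdet1, hdet2, add_zero, hv'def]
    _ = (G.updateCol lastq (col1 + fun l => ⟪fu l, P⟫)).det :=
        (Matrix.det_updateCol_add G lastq col1 _).symm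
    _ = G.det := (congrArg Matrix.det hsplit).symm
    _ = _ := hRHS
end

section
/- Let r ≥ 1 be an integer, let u_1 < u_2 < ⋯ < u_{r+2} be reals, and let v_1, …, v_{r+2} be reals. For j ∈ {1, …, r+2}, let D_j denote the determinant of the (r+1)×(r+1) matrix whose rows are (1, u_l, u_l², …, u_l^{r−1}, v_l) for l ranging over {1, …, r+2} \ {j} in increasing order. If D_1 ≥ 0 and D_{r+2} ≥ 0, then D_j ≥ 0 for every j ∈ {2, …, r+1}. -/
/-!
Write `V_j` for the Vandermonde determinant of the nodes `u_l`, `l ≠ j`. Laplace expansion of a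
determinant with a repeated column shows that `x_j = (-1)^j D_j` satisfies the moment conditions
`∑_j x_j u_j^k = 0` for `k < r`, and `w_j = (-1)^j V_j` satisfies them for `k ≤ r`. On `r + 2`
distinct nodes these `r` conditions cut out a plane, spanned by `w` and `(u_j w_j)_j`; hence
`D_j = (a + b u_j) V_j` for some affine function `a + b t`. Since `V_j > 0`, the signs of the
`D_j` are those of an affine function at increasing points, which is nonnegative between two
points where it is nonnegative.
-/

open Finset

namespace Matrix

theorem sum_alternating_det_submatrix_mul_eq_zero {R : Type*} [CommRing R] {n : ℕ}
    (A : Matrix (Fin (n + 1)) (Fin n) R) (i : Fin n) :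
    ∑ j : Fin (n + 1), (-1) ^ (j : ℕ) * (A.submatrix j.succAbove id).det * A j i = 0 := by
  set B : Matrix (Fin (n + 1)) (Fin (n + 1)) R := of fun l => Fin.cons (A l i) (A l)
  have hB : B.det = 0 :=
    det_zero_of_column_eq (Fin.succ_ne_zero i).symm fun l => rfl
  rw [← hB, det_succ_column_zero]
  exact sum_congr rfl fun j _ => mul_right_comm _ _ _

theorem det_vandermonde_pos {R : Type*} [CommRing R] [PartialOrder R] [IsStrictOrderedRing R]
    {n : ℕ} {v : Fin n → R} (hv : StrictMono v) : 0 < (vandermonde v).det := by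
  rw [det_vandermonde]
  exact prod_pos fun i _ => prod_pos fun j hj => sub_pos.2 (hv (mem_Ioi.1 hj))

end Matrix

theorem eq_zero_of_sum_mul_pow_eq_zero_of_apply_zero_of_apply_one {R : Type*} [CommRing R]
    [IsDomain R] {n : ℕ} {u : Fin (n + 2) → R} (hu : Function.Injective u)
    {x : Fin (n + 2) → R} (hx : ∀ k < n, ∑ j, x j * u j ^ k = 0) (h0 : x 0 = 0)
    (h1 : x 1 = 0) : x = 0 := by
  have htail : (fun i : Fin n => x i.succ.succ) = 0 := by
    refine Matrix.eq_zero_of_forall_pow_sum_mul_pow_eq_zero (f := fun i => u i.succ.succ)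
      (hu.comp (Fin.succ_injective _ |>.comp (Fin.succ_injective _))) fun k => ?_
    simpa [Fin.sum_univ_succ, h0, h1] using hx k k.isLt
  funext j
  exact Fin.cases h0 (fun i => Fin.cases h1 (fun i => congrFun htail i) i) j

theorem exists_affine_mul_of_sum_mul_pow_eq_zero {K : Type*} [Field K] {n : ℕ}
    {u : Fin (n + 2) → K} (hu : Function.Injective u) {w x : Fin (n + 2) → K} (hw0 : w 0 ≠ 0)
    (hw1 : w 1 ≠ 0) (hw : ∀ k ≤ n, ∑ j, w j * u j ^ k = 0)
    (hx : ∀ k < n, ∑ j, x j * u j ^ k = 0) :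
    ∃ a b : K, ∀ j, x j = (a + b * u j) * w j := by
  have hu01 : u 1 - u 0 ≠ 0 := sub_ne_zero.2 (hu.ne (by simp))
  -- `a + b t` takes the value `x j / w j` at `t = u j` for `j = 0, 1`.
  set b := (x 1 / w 1 - x 0 / w 0) / (u 1 - u 0)
  set a := x 0 / w 0 - b * u 0
  suffices h : (fun j => x j - (a + b * u j) * w j) = 0 from
    ⟨a, b, fun j => sub_eq_zero.1 (congrFun h j)⟩
  refine eq_zero_of_sum_mul_pow_eq_zero_of_apply_zero_of_apply_one hu (fun k hk => ?_) ?_ ?_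
  · have hsplit : ∑ j, (x j - (a + b * u j) * w j) * u j ^ k =
        ∑ j, x j * u j ^ k - a * ∑ j, w j * u j ^ k - b * ∑ j, w j * u j ^ (k + 1) := by
      simp only [mul_sum, ← sum_sub_distrib]
      exact sum_congr rfl fun j _ => by ring
    rw [hsplit, hx k hk, hw k hk.le, hw (k + 1) hk]
    ring
  · simp only [a]
    field_simp
    ring
  · simp only [a, b]
    field_simp
    ring

theorem add_mul_nonneg_of_le_of_le {R : Type*} [Ring R] [LinearOrder R] [IsStrictOrderedRing R]
    {a b p q x : R} (hpx : p ≤ x) (hxq : x ≤ q) (hp : 0 ≤ a + b * p) (hq : 0 ≤ a + b * q) :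
    0 ≤ a + b * x := by
  rcases le_total 0 b with hb | hb
  · exact hp.trans (add_le_add_right (mul_le_mul_of_nonneg_left hpx hb) a)
  · exact hq.trans (add_le_add_right (mul_le_mul_of_nonpos_left hxq hb) a)

theorem det_delete_row_nonneg_general
    (r : ℕ) (u v : Fin (r + 2) → ℝ) (hu : StrictMono u)
    (D : Fin (r + 2) → ℝ)
    (hD : ∀ j, D j = Matrix.det (Matrix.of fun l m : Fin (r + 1) =>
      if (m : ℕ) = r then v (j.succAbove l) else (u (j.succAbove l)) ^ (m : ℕ)))
    (h1 : 0 ≤ D 0) (h2 : 0 ≤ D (Fin.last (r + 1))) :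
    ∀ j : Fin (r + 2), j ≠ 0 → j ≠ Fin.last (r + 1) → 0 ≤ D j := by
  set V : Fin (r + 2) → ℝ := fun j => (Matrix.vandermonde (u ∘ j.succAbove)).det
  have hV : ∀ j, 0 < V j := fun j =>
    Matrix.det_vandermonde_pos (hu.comp (Fin.strictMono_succAbove j))
  have hsign : ∀ j : Fin (r + 2), (-1 : ℝ) ^ (j : ℕ) ≠ 0 := fun _ => by simp
  have hVmoments : ∀ k ≤ r, ∑ j : Fin (r + 2), (-1) ^ (j : ℕ) * V j * u j ^ k = 0 :=
    fun k hk => Matrix.sum_alternating_det_submatrix_mul_eq_zero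
      (Matrix.of fun l (m : Fin (r + 1)) => u l ^ (m : ℕ)) ⟨k, by omega⟩
  have hDmoments : ∀ k < r, ∑ j : Fin (r + 2), (-1) ^ (j : ℕ) * D j * u j ^ k = 0 := by
    intro k hk
    have := Matrix.sum_alternating_det_submatrix_mul_eq_zero
      (Matrix.of fun l (m : Fin (r + 1)) => if (m : ℕ) = r then v l else u l ^ (m : ℕ))
      ⟨k, by omega⟩
    simp only [Matrix.of_apply, hk.ne, if_false] at this
    simp only [hD]
    exact this
  obtain ⟨a, b, hab⟩ := exists_affine_mul_of_sum_mul_pow_eq_zero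
    (w := fun j => (-1) ^ (j : ℕ) * V j) (x := fun j => (-1) ^ (j : ℕ) * D j) hu.injective
    (mul_ne_zero (hsign 0) (hV 0).ne') (mul_ne_zero (hsign 1) (hV 1).ne') hVmoments hDmoments
  have hDV : ∀ j, D j = (a + b * u j) * V j := fun j =>
    mul_left_cancel₀ (hsign j) ((hab j).trans (by ring))
  have hfirst : 0 ≤ a + b * u 0 := nonneg_of_mul_nonneg_left (hDV 0 ▸ h1) (hV 0)
  have hlast : 0 ≤ a + b * u (Fin.last (r + 1)) := nonneg_of_mul_nonneg_left (hDV _ ▸ h2) (hV _)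
  intro j _ _
  rw [hDV j]
  exact mul_nonneg (add_mul_nonneg_of_le_of_le (hu.monotone (Fin.zero_le j))
    (hu.monotone (Fin.le_last j)) hfirst hlast) (hV j).le

/-- Claim 1 of the Appendix: for `u_1 < ⋯ < u_{r+2}` and reals `v_1, …, v_{r+2}`, if the
determinants `D_1` (deleting the first row) and `D_{r+2}` (deleting the last row) are
nonnegative, then so is every `D_j` obtained by deleting an intermediate row. -/
theorem det_delete_row_nonneg
    (r : ℕ) (hr : 1 ≤ r) (u v : Fin (r + 2) → ℝ) (hu : StrictMono u)
    (D : Fin (r + 2) → ℝ)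
    (hD : ∀ j, D j = Matrix.det (Matrix.of fun l m : Fin (r + 1) =>
      if (m : ℕ) = r then v (j.succAbove l) else (u (j.succAbove l)) ^ (m : ℕ)))
    (h1 : 0 ≤ D 0) (h2 : 0 ≤ D (Fin.last (r + 1))) :
    ∀ j : Fin (r + 2), j ≠ 0 → j ≠ Fin.last (r + 1) → 0 ≤ D j :=
  det_delete_row_nonneg_general r u v hu D hD h1 h2
end

section
/- Let x_1 < x_2 < ⋯ < x_n be reals and let f ∈ ℝⁿ. Let C_⌣ denote the set of vectors g ∈ ℝⁿ such that for all 1 ≤ i < j < k ≤ n, g_j ≤ ((x_k − x_j) g_i + (x_j − x_i) g_k) / (x_k − x_i). Then inf_{g ∈ C_⌣} max_{1 ≤ i ≤ n} |f_i − g_i| ≤ max_{1 ≤ i < j < k ≤ n} ( f_j − ((x_k − x_j)/(x_k − x_i)) f_i − ((x_j − x_i)/(x_k − x_i)) f_k )_+, where (x)_+ denotes the positive part of x. -/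
/-- Inequality (61), Part 2 of Step 6 in the proof of Proposition 1 (convexity test): the
sup-distance of `f` to the discrete convexity cone `C_⌣` is at most the largest positive part
of the three-point convexity defects of `f`. -/
theorem dist_to_discrete_convex_cone_le
    (n : ℕ) (hn : 1 ≤ n) (x : Fin n → ℝ) (hx : StrictMono x) (f : Fin n → ℝ)
    (Cconv : Set (Fin n → ℝ))
    (hCconv : Cconv = {g | ∀ i j k : Fin n, i < j → j < k →
      g j ≤ ((x k - x j) * g i + (x j - x i) * g k) / (x k - x i)}) :
    (sInf ((fun g => ⨆ i, |f i - g i|) '' Cconv))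
      ≤ ⨆ (i : Fin n) (j : Fin n) (k : Fin n) (_ : i < j) (_ : j < k),
          max (f j - (x k - x j) / (x k - x i) * f i - (x j - x i) / (x k - x i) * f k) 0 := by
  haveI : Nonempty (Fin n) := ⟨⟨0, hn⟩⟩
  set D : ℝ := ⨆ (i : Fin n) (j : Fin n) (k : Fin n) (_ : i < j) (_ : j < k),
      max (f j - (x k - x j) / (x k - x i) * f i - (x j - x i) / (x k - x i) * f k) 0 with hD
  -- every leaf (with props) is nonnegative
  have hF0 : ∀ i j k : Fin n, (0 : ℝ) ≤ ⨆ (_ : i < j) (_ : j < k),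
      max (f j - (x k - x j) / (x k - x i) * f i - (x j - x i) / (x k - x i) * f k) 0 := by
    intro i j k
    by_cases hij : i < j
    · rw [ciSup_pos hij]
      by_cases hjk : j < k
      · rw [ciSup_pos hjk]; exact le_max_right _ _
      · haveI : IsEmpty (j < k) := ⟨hjk⟩
        rw [Real.iSup_of_isEmpty]
    · haveI : IsEmpty (i < j) := ⟨hij⟩
      rw [Real.iSup_of_isEmpty]
  -- leaves are below D
  have hleafD : ∀ i j k : Fin n, (⨆ (_ : i < j) (_ : j < k),
      max (f j - (x k - x j) / (x k - x i) * f i - (x j - x i) / (x k - x i) * f k) 0) ≤ D := by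
    intro i j k
    calc (⨆ (_ : i < j) (_ : j < k),
        max (f j - (x k - x j) / (x k - x i) * f i - (x j - x i) / (x k - x i) * f k) 0)
        ≤ ⨆ (k : Fin n) (_ : i < j) (_ : j < k),
          max (f j - (x k - x j) / (x k - x i) * f i - (x j - x i) / (x k - x i) * f k) 0 := by
          apply le_ciSup (Finite.bddAbove_range _) k
      _ ≤ ⨆ (j : Fin n) (k : Fin n) (_ : i < j) (_ : j < k),
          max (f j - (x k - x j) / (x k - x i) * f i - (x j - x i) / (x k - x i) * f k) 0 := by
          apply le_ciSup (Finite.bddAbove_range _) j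
      _ ≤ D := by rw [hD]; apply le_ciSup (Finite.bddAbove_range _) i
  have hD0 : (0 : ℝ) ≤ D := by
    obtain ⟨i⟩ := (inferInstance : Nonempty (Fin n))
    exact (hF0 i i i).trans (hleafD i i i)
  have hdD : ∀ i j k : Fin n, i < j → j < k →
      f j - (x k - x j) / (x k - x i) * f i - (x j - x i) / (x k - x i) * f k ≤ D := by
    intro i j k hij hjk
    refine le_trans ?_ (hleafD i j k)
    rw [ciSup_pos hij, ciSup_pos hjk]
    exact le_max_left _ _
  -- the set of affine minorants
  set L : Set (ℝ × ℝ) := {l | ∀ i, l.1 * x i + l.2 ≤ f i} with hLdef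
  have hLne : L.Nonempty := by
    refine ⟨(0, Finset.univ.inf' Finset.univ_nonempty f), fun i => ?_⟩
    have h := Finset.inf'_le f (Finset.mem_univ i)
    simp only [zero_mul, zero_add]
    exact h
  set g : Fin n → ℝ := fun j => sSup ((fun l : ℝ × ℝ => l.1 * x j + l.2) '' L) with hgdef
  have hbdd : ∀ j : Fin n, BddAbove ((fun l : ℝ × ℝ => l.1 * x j + l.2) '' L) := by
    intro j
    refine ⟨f j, ?_⟩
    rintro v ⟨l, hl, rfl⟩
    exact hl j
  have hgle : ∀ j : Fin n, g j ≤ f j := by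
    intro j
    refine csSup_le (hLne.image _) ?_
    rintro v ⟨l, hl, rfl⟩
    exact hl j
  have hleg : ∀ l ∈ L, ∀ j : Fin n, l.1 * x j + l.2 ≤ g j := by
    intro l hl j
    exact le_csSup (hbdd j) (Set.mem_image_of_mem _ hl)
  -- g is in the convexity cone
  have hgC : g ∈ Cconv := by
    rw [hCconv]
    intro i j k hij hjk
    have hba : (0 : ℝ) < x j - x i := sub_pos.2 (hx hij)
    have hcb : (0 : ℝ) < x k - x j := sub_pos.2 (hx hjk)
    have hca : (0 : ℝ) < x k - x i := by linarith
    refine csSup_le (hLne.image _) ?_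
    rintro v ⟨l, hl, rfl⟩
    have h1 : l.1 * x i + l.2 ≤ g i := hleg l hl i
    have h2 : l.1 * x k + l.2 ≤ g k := hleg l hl k
    have hid : l.1 * x j + l.2
        = ((x k - x j) * (l.1 * x i + l.2) + (x j - x i) * (l.1 * x k + l.2)) / (x k - x i) := by
      field_simp
      ring
    show l.1 * x j + l.2 ≤ _
    rw [hid]
    apply (div_le_div_iff_of_pos_right hca).2
    have e1 : (x k - x j) * (l.1 * x i + l.2) ≤ (x k - x j) * g i :=
      mul_le_mul_of_nonneg_left h1 hcb.le
    have e2 : (x j - x i) * (l.1 * x k + l.2) ≤ (x j - x i) * g k :=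
      mul_le_mul_of_nonneg_left h2 hba.le
    linarith
  -- key cross inequality from the defect bound
  have hcross : ∀ i j k : Fin n, i < j → j < k →
      (f j - D - f i) / (x j - x i) ≤ (f k - f j + D) / (x k - x j) := by
    intro i j k hij hjk
    have hba : (0 : ℝ) < x j - x i := sub_pos.2 (hx hij)
    have hcb : (0 : ℝ) < x k - x j := sub_pos.2 (hx hjk)
    have hca : (0 : ℝ) < x k - x i := by linarith
    have hd := hdD i j k hij hjk
    rw [div_le_div_iff₀ hba hcb]
    have h1 : (f j - (x k - x j) / (x k - x i) * f i - (x j - x i) / (x k - x i) * f k)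
        * (x k - x i) ≤ D * (x k - x i) := mul_le_mul_of_nonneg_right hd hca.le
    have hne : (x k - x i) ≠ 0 := hca.ne'
    field_simp at h1
    nlinarith [h1]
  -- lower bound : g j ≥ f j - D, by exhibiting an affine minorant through (x j, f j - D)
  have hlow : ∀ j : Fin n, f j - D ≤ g j := by
    intro j
    have key : ∃ m : ℝ, (m, f j - D - m * x j) ∈ L := by
      by_cases hK : (Finset.univ.filter fun k : Fin n => j < k).Nonempty
      · set m := (Finset.univ.filter fun k : Fin n => j < k).inf' hK
          (fun k => (f k - f j + D) / (x k - x j)) with hm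
        refine ⟨m, fun i => ?_⟩
        rcases lt_trichotomy i j with h | h | h
        · have hba : (0 : ℝ) < x j - x i := sub_pos.2 (hx h)
          have hmge : (f j - D - f i) / (x j - x i) ≤ m := by
            refine Finset.le_inf' _ _ ?_
            intro k hk
            exact hcross i j k h (Finset.mem_filter.1 hk).2
          rw [div_le_iff₀ hba] at hmge
          simp only []
          nlinarith [hmge]
        · subst h
          simp only []
          linarith
        · have hba : (0 : ℝ) < x i - x j := sub_pos.2 (hx h)
          have hmle : m ≤ (f i - f j + D) / (x i - x j) :=
            Finset.inf'_le _ (Finset.mem_filter.2 ⟨Finset.mem_univ i, h⟩)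
          rw [le_div_iff₀ hba] at hmle
          simp only []
          nlinarith [hmle]
      · by_cases hI : (Finset.univ.filter fun i : Fin n => i < j).Nonempty
        · set m := (Finset.univ.filter fun i : Fin n => i < j).sup' hI
            (fun i => (f j - D - f i) / (x j - x i)) with hm
          refine ⟨m, fun i => ?_⟩
          rcases lt_trichotomy i j with h | h | h
          · have hba : (0 : ℝ) < x j - x i := sub_pos.2 (hx h)
            have hmem : i ∈ Finset.univ.filter (fun i' : Fin n => i' < j) :=
              Finset.mem_filter.2 ⟨Finset.mem_univ i, h⟩
            have hmge : (f j - D - f i) / (x j - x i) ≤ m :=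
              Finset.le_sup' (fun i' => (f j - D - f i') / (x j - x i')) hmem
            rw [div_le_iff₀ hba] at hmge
            simp only []
            nlinarith [hmge]
          · subst h
            simp only []
            linarith
          · exact absurd ⟨i, Finset.mem_filter.2 ⟨Finset.mem_univ i, h⟩⟩ hK
        · refine ⟨0, fun i => ?_⟩
          have hij : i = j := by
            rcases lt_trichotomy i j with h | h | h
            · exact absurd ⟨i, Finset.mem_filter.2 ⟨Finset.mem_univ i, h⟩⟩ hI
            · exact h
            · exact absurd ⟨i, Finset.mem_filter.2 ⟨Finset.mem_univ i, h⟩⟩ hK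
          subst hij
          simp only []
          linarith
    obtain ⟨m, hm⟩ := key
    have := hleg _ hm j
    simp only [] at this
    linarith
  -- finish
  have habs : ∀ i : Fin n, |f i - g i| ≤ D := by
    intro i
    have h1 := hgle i
    have h2 := hlow i
    rw [abs_le]
    constructor <;> linarith
  have hsup : (⨆ i, |f i - g i|) ≤ D := ciSup_le habs
  calc sInf ((fun g => ⨆ i, |f i - g i|) '' Cconv)
      ≤ ⨆ i, |f i - g i| := by
        refine csInf_le ⟨0, ?_⟩ (Set.mem_image_of_mem _ hgC)
        rintro v ⟨g', -, rfl⟩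
        obtain ⟨i⟩ := (inferInstance : Nonempty (Fin n))
        exact le_trans (abs_nonneg (f i - g' i)) (le_ciSup (Finite.bddAbove_range (fun i => |f i - g' i|)) i)
    _ ≤ D := hsup
end

section
/- Let x_1 < x_2 < ⋯ < x_n be reals, let F : [x_1, x_n] → ℝ be convex, and set f_i = F(x_i). Let I, J, K be nonempty subsets of {1, …, n} such that every index of I is smaller than every index of J and every index of J is smaller than every index of K. For a nonempty set E ⊂ {1, …, n} write x̄_E = (1/|E|) Σ_{i ∈ E} x_i and f̄_E = (1/|E|) Σ_{i ∈ E} f_i, and set λ = (x̄_K − x̄_J) / (x̄_K − x̄_I). Then λ ∈ [0, 1] and f̄_J ≤ λ f̄_I + (1 − λ) f̄_K. -/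
/-- The key inequality (ii) in the proof of Proposition 5 for the convexity test: for a convex
function `F` on `[x_1, x_n]` and blocks `I < J < K` of design indices, the block means satisfy
`f̄_J ≤ λ f̄_I + (1 − λ) f̄_K` with `λ = (x̄_K − x̄_J)/(x̄_K − x̄_I) ∈ [0, 1]`. -/
theorem convex_block_means
    (n : ℕ) (hn : 0 < n) (x : Fin n → ℝ) (hx : StrictMono x)
    (F : ℝ → ℝ)
    (hF : ConvexOn ℝ (Set.Icc (x ⟨0, hn⟩) (x ⟨n - 1, by omega⟩)) F)
    (f : Fin n → ℝ) (hf : ∀ i, f i = F (x i))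
    (I J K : Finset (Fin n)) (hI : I.Nonempty) (hJ : J.Nonempty) (hK : K.Nonempty)
    (hIJ : ∀ i ∈ I, ∀ j ∈ J, i < j) (hJK : ∀ j ∈ J, ∀ k ∈ K, j < k)
    (xbar fbar : Finset (Fin n) → ℝ)
    (hxbar : ∀ E, xbar E = (∑ i ∈ E, x i) / (E.card : ℝ))
    (hfbar : ∀ E, fbar E = (∑ i ∈ E, f i) / (E.card : ℝ))
    (lam : ℝ) (hlam : lam = (xbar K - xbar J) / (xbar K - xbar I)) :
    lam ∈ Set.Icc (0 : ℝ) 1 ∧ fbar J ≤ lam * fbar I + (1 - lam) * fbar K := by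
  have cI : (0:ℝ) < I.card := by exact_mod_cast Finset.card_pos.2 hI
  have cJ : (0:ℝ) < J.card := by exact_mod_cast Finset.card_pos.2 hJ
  have cK : (0:ℝ) < K.card := by exact_mod_cast Finset.card_pos.2 hK
  -- every x i lies in the interval
  have hmemIcc : ∀ i : Fin n, x i ∈ Set.Icc (x ⟨0, hn⟩) (x ⟨n - 1, by omega⟩) := by
    intro i
    constructor
    · exact hx.monotone (by simp [Fin.le_def])
    · exact hx.monotone (by simp [Fin.le_def]; omega)
  -- means lie in the interval
  have mean_mem : ∀ E : Finset (Fin n), E.Nonempty →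
      xbar E ∈ Set.Icc (x ⟨0, hn⟩) (x ⟨n - 1, by omega⟩) := by
    intro E hE
    have cE : (0:ℝ) < E.card := by exact_mod_cast Finset.card_pos.2 hE
    rw [hxbar]
    constructor
    · rw [le_div_iff₀ cE]
      calc x ⟨0, hn⟩ * E.card = ∑ _i ∈ E, x ⟨0, hn⟩ := by
            rw [Finset.sum_const, nsmul_eq_mul]; ring
        _ ≤ ∑ i ∈ E, x i := Finset.sum_le_sum fun i _ => (hmemIcc i).1
    · rw [div_le_iff₀ cE]
      calc ∑ i ∈ E, x i ≤ ∑ _i ∈ E, x ⟨n-1, by omega⟩ :=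
            Finset.sum_le_sum fun i _ => (hmemIcc i).2
        _ = x ⟨n-1, by omega⟩ * E.card := by
            rw [Finset.sum_const, nsmul_eq_mul]; ring
  -- xbar I < x j for each j ∈ J
  have hIj : ∀ j ∈ J, xbar I < x j := by
    intro j hj
    rw [hxbar, div_lt_iff₀ cI]
    calc ∑ i ∈ I, x i < ∑ _i ∈ I, x j :=
          Finset.sum_lt_sum_of_nonempty hI fun i hi => hx (hIJ i hi j hj)
      _ = x j * I.card := by rw [Finset.sum_const, nsmul_eq_mul]; ring
  have hjK : ∀ j ∈ J, x j < xbar K := by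
    intro j hj
    rw [hxbar, lt_div_iff₀ cK]
    calc x j * K.card = ∑ _k ∈ K, x j := by rw [Finset.sum_const, nsmul_eq_mul]; ring
      _ < ∑ k ∈ K, x k :=
          Finset.sum_lt_sum_of_nonempty hK fun k hk => hx (hJK j hj k hk)
  have hIJbar : xbar I < xbar J := by
    rw [hxbar J, lt_div_iff₀ cJ]
    calc xbar I * J.card = ∑ _j ∈ J, xbar I := by rw [Finset.sum_const, nsmul_eq_mul]; ring
      _ < ∑ j ∈ J, x j := Finset.sum_lt_sum_of_nonempty hJ fun j hj => hIj j hj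
  have hJKbar : xbar J < xbar K := by
    rw [hxbar J, div_lt_iff₀ cJ]
    calc ∑ j ∈ J, x j < ∑ _j ∈ J, xbar K :=
          Finset.sum_lt_sum_of_nonempty hJ fun j hj => hjK j hj
      _ = xbar K * J.card := by rw [Finset.sum_const, nsmul_eq_mul]; ring
  have hIK : xbar I < xbar K := hIJbar.trans hJKbar
  have hd : (0:ℝ) < xbar K - xbar I := by linarith
  -- λ ∈ [0,1]
  have hlam01 : lam ∈ Set.Icc (0:ℝ) 1 := by
    constructor
    · rw [hlam]; exact div_nonneg (by linarith) hd.le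
    · rw [hlam, div_le_one hd]; linarith
  refine ⟨hlam01, ?_⟩
  -- Jensen: F (xbar E) ≤ fbar E
  have jensen : ∀ E : Finset (Fin n), E.Nonempty → F (xbar E) ≤ fbar E := by
    intro E hE
    have cE : (0:ℝ) < E.card := by exact_mod_cast Finset.card_pos.2 hE
    have h := hF.map_centerMass_le (t := E) (w := fun _ => (1:ℝ)) (p := x)
      (fun i _ => zero_le_one) (by simp [cE]) (fun i _ => hmemIcc i)
    simp only [Finset.centerMass, smul_eq_mul, one_mul, Finset.sum_const, nsmul_eq_mul,
      mul_one, Function.comp] at h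
    rw [hxbar, hfbar, div_eq_inv_mul, div_eq_inv_mul]
    simp only [hf]
    exact h
  -- pointwise convexity estimate for each j ∈ J
  set μ : Fin n → ℝ := fun j => (xbar K - x j) / (xbar K - xbar I) with hμ
  have key : ∀ j ∈ J, f j ≤ μ j * fbar I + (1 - μ j) * fbar K := by
    intro j hj
    have h0 : 0 ≤ μ j := div_nonneg (by linarith [hjK j hj]) hd.le
    have h1 : μ j ≤ 1 := by
      rw [hμ]; simp only
      rw [div_le_one hd]; linarith [hIj j hj]
    have hcomb : μ j • xbar I + (1 - μ j) • xbar K = x j := by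
      simp only [smul_eq_mul, hμ]
      field_simp
      ring
    have hconv := hF.2 (mean_mem I hI) (mean_mem K hK) h0 (by linarith)
      (by ring : μ j + (1 - μ j) = 1)
    rw [hcomb] at hconv
    have hFI := jensen I hI
    have hFK := jensen K hK
    rw [hf j]
    calc F (x j) ≤ μ j • F (xbar I) + (1 - μ j) • F (xbar K) := hconv
      _ ≤ μ j * fbar I + (1 - μ j) * fbar K := by
          simp only [smul_eq_mul]
          gcongr <;> linarith
  -- sum of μ over J
  have sum_mu : ∑ j ∈ J, μ j = J.card * lam := by
    rw [hlam, hxbar J]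
    simp only [hμ]
    rw [← Finset.sum_div, Finset.sum_sub_distrib, Finset.sum_const, nsmul_eq_mul]
    field_simp
  -- conclude
  rw [hfbar J, div_le_iff₀ cJ]
  calc ∑ j ∈ J, f j ≤ ∑ j ∈ J, (μ j * fbar I + (1 - μ j) * fbar K) :=
        Finset.sum_le_sum key
    _ = (∑ j ∈ J, μ j) * fbar I + ((J.card : ℝ) - ∑ j ∈ J, μ j) * fbar K := by
        rw [Finset.sum_add_distrib, ← Finset.sum_mul, ← Finset.sum_mul,
          Finset.sum_sub_distrib, Finset.sum_const, nsmul_eq_mul, mul_one]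
    _ = (lam * fbar I + (1 - lam) * fbar K) * J.card := by
        rw [sum_mu]; ring
end

section
/- For every integer r ≥ 1 there exists a constant C(r) > 0 such that for all integers n ≥ 1 and every set J of consecutive integers contained in {1, …, n} with |J| ≥ r + 1, min over (a_0, a_1, …, a_{r−1}) ∈ ℝ^r of Σ_{i ∈ J} ( (i/n)^r − a_0 − a_1 (i/n) − ⋯ − a_{r−1} (i/n)^{r−1} )² ≥ C(r) |J|^{2r+1} / n^{2r}. Equivalently, the squared Euclidean distance γ_J² of the restriction of the vector ((i/n)^r)_{i} to J from the space spanned by the restrictions of 1, (i/n), …, (i/n)^{r−1} to J is at least C(r) |J|^{2r+1} / n^{2r}. -/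
open Finset

lemma neg_one_pow_sub_real (m k : ℕ) (h : k ≤ m) :
    (-1:ℝ)^(m-k) = (-1)^m * (-1)^k := by
  have hs : (-1:ℝ)^(m-k) * (-1)^k = (-1)^m := by
    rw [← pow_add]; congr 1; omega
  have h1 : ((-1:ℝ)^k) * ((-1:ℝ)^k) = 1 := by
    rw [← pow_add, ← two_mul, pow_mul]; norm_num
  calc (-1:ℝ)^(m-k) = (-1)^(m-k) * ((-1)^k * (-1)^k) := by rw [h1, mul_one]
  _ = ((-1)^(m-k) * (-1)^k) * (-1)^k := by ring
  _ = (-1)^m * (-1)^k := by rw [hs]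

lemma alt_sum_choose_real (n : ℕ) :
    ∑ k ∈ range (n+1), (-1:ℝ)^k * (n.choose k) = if n = 0 then 1 else 0 := by
  have h := @Int.alternating_sum_range_choose n
  have h2 : ((∑ m ∈ range (n + 1), (-1:ℤ) ^ m * ↑(n.choose m) : ℤ) : ℝ)
      = ((if n = 0 then (1:ℤ) else 0 : ℤ) : ℝ) := by rw [h]
  push_cast at h2
  convert h2 using 1


lemma S_eq : ∀ r t : ℕ, t ≤ r →
    ∑ k ∈ range (r+1), (-1:ℝ)^(r-k) * (r.choose k) * (k:ℝ)^t
      = if t = r then (r.factorial : ℝ) else 0 := by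
  intro r
  induction r with
  | zero => intro t ht; interval_cases t; simp
  | succ r IH =>
    intro t ht
    match t with
    | 0 =>
      have h0 : ∑ k ∈ range (r+2), (-1:ℝ)^(r+1-k) * ((r+1).choose k) * (k:ℝ)^0
          = (-1:ℝ)^(r+1) * ∑ k ∈ range (r+2), (-1:ℝ)^k * ((r+1).choose k) := by
        rw [Finset.mul_sum]
        apply Finset.sum_congr rfl
        intro k hk
        have hk' : k ≤ r+1 := by simpa [Nat.lt_succ_iff] using hk
        rw [neg_one_pow_sub_real _ _ hk', pow_zero, mul_one]
        ring
      rw [h0, alt_sum_choose_real]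
      simp
    | (t+1) =>
      set T : ℕ → ℝ := fun s => ∑ k ∈ range (r+1), (-1:ℝ)^(r-k) * (r.choose k) * (k:ℝ)^s with hT
      set f : ℕ → ℝ := fun j => (-1:ℝ)^(r+1-j) * (r.choose j) * (j:ℝ)^(t+1) with hf
      have key : ∑ k ∈ range (r+2), (-1:ℝ)^(r+1-k) * ((r+1).choose k) * (k:ℝ)^(t+1)
          = ∑ s ∈ range (t+1), ((t+1).choose s : ℝ) * T s := by
        rw [Finset.sum_range_succ' _ (r+1)]
        have h00 : (-1:ℝ)^(r+1-0) * (((r+1).choose 0 : ℕ):ℝ) * ((0:ℕ):ℝ)^(t+1) = 0 := by simp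
        rw [h00, add_zero]
        have hterm : ∀ k ∈ range (r+1),
            (-1:ℝ)^(r+1-(k+1)) * (((r+1).choose (k+1) : ℕ):ℝ) * (((k+1:ℕ)):ℝ)^(t+1)
            = (-1:ℝ)^(r-k) * (r.choose k) * ((k:ℝ)+1)^(t+1)
              + (-1:ℝ)^(r-k) * (r.choose (k+1)) * ((k:ℝ)+1)^(t+1) := by
          intro k hk
          rw [Nat.succ_sub_succ, Nat.choose_succ_succ]
          push_cast
          ring
        rw [Finset.sum_congr rfl hterm, Finset.sum_add_distrib]
        have hB : ∑ k ∈ range (r+1), (-1:ℝ)^(r-k) * (r.choose (k+1)) * ((k:ℝ)+1)^(t+1)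
            = - T (t+1) := by
          have hg : ∑ k ∈ range (r+1), (-1:ℝ)^(r-k) * (r.choose (k+1)) * ((k:ℝ)+1)^(t+1)
              = ∑ k ∈ range (r+1), f (k+1) := by
            apply Finset.sum_congr rfl; intro k hk
            rw [hf]; simp only []
            rw [Nat.succ_sub_succ]; push_cast; ring
          have hf0 : f 0 = 0 := by simp [hf]
          have hftop : f (r+1) = 0 := by simp [hf, Nat.choose_succ_self]
          calc ∑ k ∈ range (r+1), (-1:ℝ)^(r-k) * (r.choose (k+1)) * ((k:ℝ)+1)^(t+1)
              = ∑ k ∈ range (r+1), f (k+1) + f 0 := by rw [hg, hf0, add_zero]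
            _ = ∑ j ∈ range (r+2), f j := (Finset.sum_range_succ' f (r+1)).symm
            _ = ∑ j ∈ range (r+1), f j + f (r+1) := Finset.sum_range_succ f (r+1)
            _ = ∑ j ∈ range (r+1), f j := by rw [hftop, add_zero]
            _ = - T (t+1) := by
                rw [hT, ← Finset.sum_neg_distrib]
                apply Finset.sum_congr rfl
                intro j hj
                have hj' : j ≤ r := by simpa [Nat.lt_succ_iff] using hj
                have : r+1-j = (r-j)+1 := by omega
                rw [hf]; simp only []
                rw [this, pow_succ]; ring
        have hA : ∑ k ∈ range (r+1), (-1:ℝ)^(r-k) * (r.choose k) * ((k:ℝ)+1)^(t+1)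
            = ∑ s ∈ range (t+2), ((t+1).choose s : ℝ) * T s := by
          have hexp : ∀ k : ℕ, ((k:ℝ)+1)^(t+1)
              = ∑ s ∈ range (t+2), ((t+1).choose s:ℝ) * (k:ℝ)^s := by
            intro k
            rw [add_pow]
            apply Finset.sum_congr rfl
            intro s hs
            rw [one_pow]; ring
          calc ∑ k ∈ range (r+1), (-1:ℝ)^(r-k) * (r.choose k) * ((k:ℝ)+1)^(t+1)
              = ∑ k ∈ range (r+1), ∑ s ∈ range (t+2),
                  ((t+1).choose s:ℝ) * ((-1:ℝ)^(r-k) * (r.choose k) * (k:ℝ)^s) := by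
                apply Finset.sum_congr rfl
                intro k hk
                rw [hexp, Finset.mul_sum]
                apply Finset.sum_congr rfl
                intro s hs; ring
            _ = ∑ s ∈ range (t+2), ∑ k ∈ range (r+1),
                  ((t+1).choose s:ℝ) * ((-1:ℝ)^(r-k) * (r.choose k) * (k:ℝ)^s) :=
                Finset.sum_comm
            _ = ∑ s ∈ range (t+2), ((t+1).choose s : ℝ) * T s := by
                apply Finset.sum_congr rfl
                intro s hs
                rw [hT, Finset.mul_sum]
        rw [hA, hB, Finset.sum_range_succ]
        simp only [Nat.choose_self, Nat.cast_one, one_mul]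
        ring
      rw [key]
      have hTs : ∀ s ∈ range (t+1), ((t+1).choose s:ℝ) * T s
          = ((t+1).choose s:ℝ) * (if s = r then (r.factorial:ℝ) else 0) := by
        intro s hs
        have hs' : s ≤ t := by simpa [Nat.lt_succ_iff] using hs
        rw [hT]; dsimp only; rw [IH s (le_trans hs' (by omega))]
      rw [Finset.sum_congr rfl hTs]
      by_cases hr : t = r
      · subst hr
        rw [Finset.sum_eq_single t]
        · simp [Nat.choose_succ_self_right, Nat.factorial_succ]
        · intro s hs hne; simp [hne]
        · intro hcon; simp at hcon
      · have hz : ∀ s ∈ range (t+1), ((t+1).choose s:ℝ) * (if s = r then (r.factorial:ℝ) else 0) = 0 := by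
          intro s hs
          have hs' : s ≤ t := by simpa [Nat.lt_succ_iff] using hs
          have : s ≠ r := by omega
          simp [this]
        rw [Finset.sum_congr rfl hz, Finset.sum_const, smul_zero]
        have : ¬ (t + 1 = r + 1) := by omega
        simp [this, hr]

lemma diff_identity (r t : ℕ) (ht : t ≤ r) (x y : ℝ) :
    ∑ k ∈ range (r+1), (-1:ℝ)^(r-k) * (r.choose k) * (x + (k:ℝ)*y)^t
      = if t = r then (r.factorial:ℝ) * y^r else 0 := by
  have hexp : ∀ k : ℕ, (x + (k:ℝ)*y)^t
      = ∑ m ∈ range (t+1), ((t.choose m:ℝ) * y^m * x^(t-m)) * (k:ℝ)^m := by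
    intro k
    rw [add_comm, add_pow]
    apply Finset.sum_congr rfl; intro m hm
    rw [mul_pow]; ring
  calc ∑ k ∈ range (r+1), (-1:ℝ)^(r-k) * (r.choose k) * (x + (k:ℝ)*y)^t
      = ∑ k ∈ range (r+1), ∑ m ∈ range (t+1),
          ((t.choose m:ℝ) * y^m * x^(t-m)) * ((-1:ℝ)^(r-k) * (r.choose k) * (k:ℝ)^m) := by
        apply Finset.sum_congr rfl; intro k hk
        rw [hexp, Finset.mul_sum]
        apply Finset.sum_congr rfl; intro m hm; ring
    _ = ∑ m ∈ range (t+1), ∑ k ∈ range (r+1),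
          ((t.choose m:ℝ) * y^m * x^(t-m)) * ((-1:ℝ)^(r-k) * (r.choose k) * (k:ℝ)^m) :=
        Finset.sum_comm
    _ = ∑ m ∈ range (t+1), ((t.choose m:ℝ) * y^m * x^(t-m)) *
          (if m = r then (r.factorial:ℝ) else 0) := by
        apply Finset.sum_congr rfl; intro m hm
        rw [← Finset.mul_sum, S_eq r m (le_trans (by simpa [Nat.lt_succ_iff] using hm) ht)]
    _ = if t = r then (r.factorial:ℝ) * y^r else 0 := by
        by_cases htr : t = r
        · subst htr
          rw [Finset.sum_eq_single t]
          · simp [mul_comm]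
          · intro m hm hne; simp [hne]
          · intro hcon; simp at hcon
        · have hz : ∀ m ∈ range (t+1), ((t.choose m:ℝ) * y^m * x^(t-m)) *
              (if m = r then (r.factorial:ℝ) else 0) = 0 := by
            intro m hm
            have : m ≠ r := by
              have : m ≤ t := by simpa [Nat.lt_succ_iff] using hm
              omega
            simp [this]
          rw [Finset.sum_congr rfl hz, Finset.sum_const, smul_zero, if_neg htr]

section
variable (r n B : ℕ) (co : Fin r → ℝ)

noncomputable def resid (r n : ℕ) (co : Fin r → ℝ) (i : ℕ) : ℝ :=
  ((i:ℝ)/n)^r - ∑ l : Fin r, co l * ((i:ℝ)/n)^(l:ℕ)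

lemma block_identity (i : ℕ) :
    ∑ k ∈ range (r+1), (-1:ℝ)^(r-k) * (r.choose k) * resid r n co (i + k*B)
      = (r.factorial:ℝ) * ((B:ℝ)/n)^r := by
  have hcast : ∀ k : ℕ, ((i + k*B : ℕ):ℝ)/n = (i:ℝ)/n + (k:ℝ) * ((B:ℝ)/n) := by
    intro k; push_cast; ring
  calc ∑ k ∈ range (r+1), (-1:ℝ)^(r-k) * (r.choose k) * resid r n co (i + k*B)
      = ∑ k ∈ range (r+1), ((-1:ℝ)^(r-k) * (r.choose k) * ((i:ℝ)/n + (k:ℝ)*((B:ℝ)/n))^r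
          - ∑ l : Fin r, co l * ((-1:ℝ)^(r-k) * (r.choose k) * ((i:ℝ)/n + (k:ℝ)*((B:ℝ)/n))^(l:ℕ))) := by
        apply Finset.sum_congr rfl; intro k hk
        unfold resid
        rw [hcast, mul_sub, Finset.mul_sum]
        congr 1
        apply Finset.sum_congr rfl; intro l hl; ring
    _ = (∑ k ∈ range (r+1), (-1:ℝ)^(r-k) * (r.choose k) * ((i:ℝ)/n + (k:ℝ)*((B:ℝ)/n))^r)
        - ∑ k ∈ range (r+1), ∑ l : Fin r,
            co l * ((-1:ℝ)^(r-k) * (r.choose k) * ((i:ℝ)/n + (k:ℝ)*((B:ℝ)/n))^(l:ℕ)) :=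
        Finset.sum_sub_distrib _ _
    _ = (r.factorial:ℝ) * ((B:ℝ)/n)^r := by
        rw [diff_identity r r le_rfl, if_pos rfl, Finset.sum_comm]
        have hz : ∀ l : Fin r, ∑ k ∈ range (r+1),
            co l * ((-1:ℝ)^(r-k) * (r.choose k) * ((i:ℝ)/n + (k:ℝ)*((B:ℝ)/n))^(l:ℕ)) = 0 := by
          intro l
          rw [← Finset.mul_sum, diff_identity r (l:ℕ) (le_of_lt l.isLt), if_neg (Nat.ne_of_lt l.isLt)]
          ring
        rw [Finset.sum_congr rfl (fun l _ => hz l), Finset.sum_const, smul_zero, sub_zero]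

lemma block_lower (i : ℕ) :
    (r.factorial:ℝ)^2 * ((B:ℝ)/n)^(2*r) / 4^r
      ≤ ∑ k ∈ range (r+1), (resid r n co (i + k*B))^2 := by
  have hid := block_identity r n B co i
  have hcs := Finset.sum_mul_sq_le_sq_mul_sq (range (r+1))
    (fun k => (-1:ℝ)^(r-k) * (r.choose k)) (fun k => resid r n co (i + k*B))
  rw [hid] at hcs
  have hc2 : ∑ k ∈ range (r+1), ((-1:ℝ)^(r-k) * (r.choose k))^2 ≤ (4:ℝ)^r := by
    have h1 : ∀ k ∈ range (r+1), ((-1:ℝ)^(r-k) * (r.choose k))^2 = ((r.choose k:ℝ))^2 := by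
      intro k hk
      rw [mul_pow, ← pow_mul, mul_comm (r-k) 2, pow_mul]
      norm_num
    rw [Finset.sum_congr rfl h1]
    have h2 : ∑ k ∈ range (r+1), ((r.choose k:ℝ))^2 ≤ (∑ k ∈ range (r+1), (r.choose k:ℝ))^2 :=
      Finset.sum_sq_le_sq_sum_of_nonneg (by intro k _; positivity)
    have h3 : (∑ k ∈ range (r+1), (r.choose k:ℝ)) = (2:ℝ)^r := by
      rw [← Nat.cast_sum]
      rw [Nat.sum_range_choose]
      push_cast; ring
    calc ∑ k ∈ range (r+1), ((r.choose k:ℝ))^2 ≤ ((2:ℝ)^r)^2 := by rw [← h3]; exact h2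
      _ = (4:ℝ)^r := by rw [← pow_mul, mul_comm, pow_mul]; norm_num
  have hsq : ((r.factorial:ℝ) * ((B:ℝ)/n)^r)^2
      = (r.factorial:ℝ)^2 * ((B:ℝ)/n)^(2*r) := by
    rw [mul_pow, ← pow_mul, mul_comm r 2]
  have hfnn : 0 ≤ ∑ k ∈ range (r+1), (resid r n co (i + k*B))^2 :=
    Finset.sum_nonneg (fun k _ => sq_nonneg _)
  have h4 : (r.factorial:ℝ)^2 * ((B:ℝ)/n)^(2*r)
      ≤ (4:ℝ)^r * ∑ k ∈ range (r+1), (resid r n co (i + k*B))^2 := by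
    calc (r.factorial:ℝ)^2 * ((B:ℝ)/n)^(2*r) = ((r.factorial:ℝ) * ((B:ℝ)/n)^r)^2 := hsq.symm
      _ ≤ (∑ k ∈ range (r+1), ((-1:ℝ)^(r-k) * (r.choose k))^2)
            * ∑ k ∈ range (r+1), (resid r n co (i + k*B))^2 := hcs
      _ ≤ (4:ℝ)^r * ∑ k ∈ range (r+1), (resid r n co (i + k*B))^2 :=
          mul_le_mul_of_nonneg_right hc2 hfnn
  rw [div_le_iff₀ (by positivity : (0:ℝ) < 4^r)]
  linarith [h4]

end

/-- Evaluation of `γ_J` in the proof of the second part of Proposition 3: for the regular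
design `x_i = i/n`, the squared distance of the restriction of `(x_i^r)` to a set `J` of at
least `r + 1` consecutive indices from the polynomials of degree `< r` on `J` is at least
`C(r) |J|^{2r+1} / n^{2r}`. -/
theorem dist_sq_monomial_to_polynomials_lower_bound :
    ∀ r : ℕ, 1 ≤ r → ∃ C : ℝ, 0 < C ∧
      ∀ n : ℕ, 1 ≤ n → ∀ a b : ℕ, 1 ≤ a → b ≤ n →
        r + 1 ≤ (Finset.Icc a b).card →
        C * ((Finset.Icc a b).card : ℝ) ^ (2 * r + 1) / (n : ℝ) ^ (2 * r)
          ≤ ⨅ co : Fin r → ℝ, ∑ i ∈ Finset.Icc a b,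
              (((i : ℝ) / n) ^ r - ∑ l : Fin r, co l * ((i : ℝ) / n) ^ (l : ℕ)) ^ 2 := by
  intro r hr
  refine ⟨(r.factorial:ℝ)^2 / (4^r * (2*((r:ℝ)+1))^(2*r+1)), by positivity, ?_⟩
  intro n hn a b ha hb hcard
  set m : ℕ := (Finset.Icc a b).card with hm
  have hmval : m = b + 1 - a := by rw [hm, Nat.card_Icc]
  set B : ℕ := m / (r+1) with hBdef
  have hB1 : 1 ≤ B := by
    rw [hBdef, Nat.le_div_iff_mul_le (by omega)]
    omega
  have hBm : (r+1)*B ≤ m := by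
    rw [hBdef, mul_comm]
    exact Nat.div_mul_le_self m (r+1)
  have hm2B : m ≤ 2*((r+1)*B) := by
    have h1 : (r+1)*B + m % (r+1) = m := by
      rw [hBdef]; exact Nat.div_add_mod m (r+1)
    have h2 : m % (r+1) < r+1 := Nat.mod_lt _ (by omega)
    have h3 : (r+1) * 1 ≤ (r+1)*B := Nat.mul_le_mul_left _ hB1
    omega
  have hab : a ≤ b := by omega
  have hn0 : (0:ℝ) < n := by exact_mod_cast hn
  have hB0 : 0 < B := hB1
  -- membership of block points
  have hmem : ∀ o ∈ range B, ∀ k ∈ range (r+1), a + o + k*B ∈ Finset.Icc a b := by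
    intro o ho k hk
    rw [Finset.mem_range] at ho hk
    have hkB : k*B ≤ r*B := Nat.mul_le_mul_right _ (by omega)
    have hsplit : (r+1)*B = r*B + B := by ring
    rw [Finset.mem_Icc]
    omega
  apply le_ciInf
  intro co
  -- introduce resid
  have hres : ∀ i : ℕ, (((i : ℝ) / n) ^ r - ∑ l : Fin r, co l * ((i : ℝ) / n) ^ (l : ℕ)) ^ 2
      = (resid r n co i)^2 := fun i => rfl
  simp only [hres]
  -- offset decomposition
  set g : ℕ × ℕ → ℕ := fun p => a + p.1 + p.2 * B with hg
  have hinj : ∀ p ∈ range B ×ˢ range (r+1), ∀ q ∈ range B ×ˢ range (r+1),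
      g p = g q → p = q := by
    intro p hp q hq hpq
    rw [Finset.mem_product, Finset.mem_range, Finset.mem_range] at hp hq
    have h1 : (p.1 + p.2 * B) = (q.1 + q.2 * B) := by
      simp only [hg] at hpq; omega
    have hmod : ∀ o k : ℕ, o < B → (o + k*B) % B = o := by
      intro o k h; rw [Nat.add_mul_mod_self_right, Nat.mod_eq_of_lt h]
    have hdiv : ∀ o k : ℕ, o < B → (o + k*B)/B = k := by
      intro o k h
      rw [Nat.add_mul_div_right _ _ hB0, Nat.div_eq_of_lt h, zero_add]
    have e1 : p.1 = q.1 := by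
      have := congrArg (· % B) h1
      simpa [hmod _ _ hp.1, hmod _ _ hq.1] using this
    have e2 : p.2 = q.2 := by
      have := congrArg (· / B) h1
      simpa [hdiv _ _ hp.1, hdiv _ _ hq.1] using this
    exact Prod.ext e1 e2
  have hsubset : (range B ×ˢ range (r+1)).image g ⊆ Finset.Icc a b := by
    intro i hi
    rw [Finset.mem_image] at hi
    obtain ⟨p, hp, rfl⟩ := hi
    rw [Finset.mem_product] at hp
    exact hmem p.1 hp.1 p.2 hp.2
  have step1 : ∑ i ∈ (range B ×ˢ range (r+1)).image g, (resid r n co i)^2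
      ≤ ∑ i ∈ Finset.Icc a b, (resid r n co i)^2 :=
    Finset.sum_le_sum_of_subset_of_nonneg hsubset (fun i _ _ => sq_nonneg _)
  have step2 : ∑ i ∈ (range B ×ˢ range (r+1)).image g, (resid r n co i)^2
      = ∑ o ∈ range B, ∑ k ∈ range (r+1), (resid r n co (a + o + k*B))^2 := by
    rw [Finset.sum_image hinj, Finset.sum_product]
  have step3 : (B:ℝ) * ((r.factorial:ℝ)^2 * ((B:ℝ)/n)^(2*r) / 4^r)
      ≤ ∑ o ∈ range B, ∑ k ∈ range (r+1), (resid r n co (a + o + k*B))^2 := by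
    calc (B:ℝ) * ((r.factorial:ℝ)^2 * ((B:ℝ)/n)^(2*r) / 4^r)
        = ∑ _o ∈ range B, (r.factorial:ℝ)^2 * ((B:ℝ)/n)^(2*r) / 4^r := by
          rw [Finset.sum_const, Finset.card_range, nsmul_eq_mul]
      _ ≤ ∑ o ∈ range B, ∑ k ∈ range (r+1), (resid r n co (a + o + k*B))^2 :=
          Finset.sum_le_sum (fun o _ => block_lower r n B co (a + o))
  -- final algebra
  have hmB : (m:ℝ) ≤ (2*((r:ℝ)+1)) * B := by
    have : (m:ℝ) ≤ ((2*((r+1)*B) : ℕ) : ℝ) := by exact_mod_cast hm2B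
    push_cast at this
    linarith
  have hpow : (m:ℝ)^(2*r+1) ≤ (2*((r:ℝ)+1))^(2*r+1) * (B:ℝ)^(2*r+1) := by
    rw [← mul_pow]
    exact pow_le_pow_left₀ (by positivity) hmB _
  have halg : (r.factorial:ℝ)^2 / (4^r * (2*((r:ℝ)+1))^(2*r+1)) * (m:ℝ)^(2*r+1) / (n:ℝ)^(2*r)
      ≤ (B:ℝ) * ((r.factorial:ℝ)^2 * ((B:ℝ)/n)^(2*r) / 4^r) := by
    have hBr : ((B:ℝ)/n)^(2*r) = (B:ℝ)^(2*r) / (n:ℝ)^(2*r) := div_pow _ _ _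
    rw [hBr]
    have hD : (0:ℝ) < (2*((r:ℝ)+1))^(2*r+1) := by positivity
    have hX : (m:ℝ)^(2*r+1) / (2*((r:ℝ)+1))^(2*r+1) ≤ (B:ℝ)^(2*r+1) := by
      rw [div_le_iff₀ hD]
      linear_combination hpow
    have e1 : (r.factorial:ℝ)^2 / (4^r * (2*((r:ℝ)+1))^(2*r+1)) * (m:ℝ)^(2*r+1) / (n:ℝ)^(2*r)
        = (r.factorial:ℝ)^2 * ((m:ℝ)^(2*r+1) / (2*((r:ℝ)+1))^(2*r+1)) / (4^r * (n:ℝ)^(2*r)) := by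
      field_simp
    have e2 : (B:ℝ) * ((r.factorial:ℝ)^2 * ((B:ℝ)^(2*r) / (n:ℝ)^(2*r)) / 4^r)
        = (r.factorial:ℝ)^2 * (B:ℝ)^(2*r+1) / (4^r * (n:ℝ)^(2*r)) := by
      field_simp
      ring
    rw [e1, e2]
    gcongr
  calc (r.factorial:ℝ)^2 / (4^r * (2*((r:ℝ)+1))^(2*r+1)) * (m:ℝ)^(2*r+1) / (n:ℝ)^(2*r)
      ≤ (B:ℝ) * ((r.factorial:ℝ)^2 * ((B:ℝ)/n)^(2*r) / 4^r) := halg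
    _ ≤ ∑ o ∈ range B, ∑ k ∈ range (r+1), (resid r n co (a + o + k*B))^2 := step3
    _ = ∑ i ∈ (range B ×ˢ range (r+1)).image g, (resid r n co i)^2 := step2.symm
    _ ≤ ∑ i ∈ Finset.Icc a b, (resid r n co i)^2 := step1
end

section
/- Let r ≥ 1, let 0 ≤ x_1 < ⋯ < x_n ≤ 1, let R : [0, 1] → ℝ be nonvanishing, and let F : [0, 1] → ℝ be such that RF is r times differentiable on [0, 1]. Set Λ(F) = (RF)^{(r)} and ω(h) = sup_{|x − y| ≤ h} |Λ(F)(x) − Λ(F)(y)| for h > 0. Let J ⊂ {1, …, n} be a set of consecutive indices with |J| ≥ r + 1, let h_J = max_{i ∈ J} x_i − min_{i ∈ J} x_i, let X_J be the span of the vectors x_J^0, …, x_J^{r−1} (powers of the design restricted to J and 0 elsewhere), γ_J = ‖R ⋆ (x_J^r − Π_{X_J} x_J^r)‖ and t_J* = −R ⋆ (x_J^r − Π_{X_J} x_J^r)/γ_J, where (R ⋆ w)_i = R(x_i) w_i. Then with f = (F(x_1), …, F(x_n)), ⟨f, t_J*⟩ ≥ −( min_{i ∈ J} Λ(F)(x_i)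 + ω(h_J) ) · ‖x_J^r − Π_{X_J} x_J^r‖² / ( r! · γ_J ). -/
open Polynomial Set

lemma exists_root_between {p : ℝ[X]} {u v : ℝ} (huv : u < v)
    (h : p.eval u * p.eval v < 0) : ∃ c ∈ Ioo u v, p.eval c = 0 := by
  have hcont : ContinuousOn (fun t => p.eval t) (Icc u v) :=
    (Polynomial.continuous p).continuousOn
  rcases mul_neg_iff.mp h with ⟨h1, h2⟩ | ⟨h1, h2⟩
  · have := intermediate_value_Ioo' huv.le hcont (a := u) (b := v)
    have h0 : (0:ℝ) ∈ Ioo (p.eval v) (p.eval u) := ⟨h2, h1⟩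
    obtain ⟨c, hc, hc0⟩ := this h0
    exact ⟨c, hc, hc0⟩
  · have := intermediate_value_Ioo huv.le hcont (a := u) (b := v)
    obtain ⟨c, hc, hc0⟩ := this ⟨h1, h2⟩
    exact ⟨c, hc, hc0⟩

lemma no_sign_change_aux (N : ℕ) (p : ℝ[X]) (hN : p.natDegree ≤ N) (a b : ℝ)
    (heven : ∀ z ∈ Ioo a b, Even (p.rootMultiplicity z)) :
    ∀ u ∈ Icc a b, ∀ v ∈ Icc a b, u < v → 0 ≤ p.eval u * p.eval v := by
  induction N generalizing p with
  | zero =>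
    intro u _ v _ _
    have : p = C (p.coeff 0) := Polynomial.eq_C_of_natDegree_le_zero hN
    rw [this]; simp [mul_self_nonneg]
  | succ N ih =>
    intro u hu v hv huv
    by_contra hlt
    push_neg at hlt
    have hpu : p.eval u ≠ 0 := fun h => by simp [h] at hlt
    have hpv : p.eval v ≠ 0 := fun h => by simp [h] at hlt
    have hp0 : p ≠ 0 := fun h => hpu (by simp [h])
    obtain ⟨c, hc, hc0⟩ := exists_root_between huv hlt
    have hcab : c ∈ Ioo a b := ⟨lt_of_le_of_lt hu.1 hc.1, lt_of_lt_of_le hc.2 hv.2⟩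
    set m := p.rootMultiplicity c with hm
    have hmeven : Even m := heven c hcab
    have hmpos : 0 < m := (Polynomial.rootMultiplicity_pos hp0).mpr hc0
    obtain ⟨q, hq, hndvd⟩ := p.exists_eq_pow_rootMultiplicity_mul_and_not_dvd hp0 c
    have hq0 : q ≠ 0 := fun h => hp0 (by rw [hq, h, mul_zero])
    have hXc : ((X - C c : ℝ[X]) ^ m) ≠ 0 := pow_ne_zero _ (X_sub_C_ne_zero c)
    have hdeg : p.natDegree = m + q.natDegree := by
      rw [hq, Polynomial.natDegree_mul hXc hq0, Polynomial.natDegree_pow,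
        Polynomial.natDegree_X_sub_C, mul_one]
    have hqN : q.natDegree ≤ N := by omega
    have hqeven : ∀ z ∈ Ioo a b, Even (q.rootMultiplicity z) := by
      intro z hz
      by_cases hzc : z = c
      · subst hzc
        have : q.rootMultiplicity z = 0 :=
          Polynomial.rootMultiplicity_eq_zero
            (fun hroot => hndvd (Polynomial.dvd_iff_isRoot.mpr hroot))
        simp [this]
      · have := Polynomial.rootMultiplicity_mul (x := z) (hq ▸ hp0 : ((X - C c:ℝ[X])^m) * q ≠ 0)
        have hz0 : Polynomial.rootMultiplicity z ((X - C c : ℝ[X]) ^ m) = 0 := by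
          apply Polynomial.rootMultiplicity_eq_zero
          simp [Polynomial.IsRoot, sub_eq_zero, hzc]
        have hpz : p.rootMultiplicity z = q.rootMultiplicity z := by
          rw [hq, this, hz0, zero_add]
        rw [← hpz]; exact heven z hz
    have hu' : (u - c) ^ m > 0 := Even.pow_pos hmeven (by intro h; exact absurd (by linarith [hc.1, sub_eq_zero.mp h]) (lt_irrefl u))
    have hv' : (v - c) ^ m > 0 := Even.pow_pos hmeven (fun h => by have := sub_eq_zero.mp h; subst this; exact absurd hc.2 (lt_irrefl v))
    have hevalu : p.eval u = (u - c) ^ m * q.eval u := by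
      rw [hq]; simp [hm]
    have hevalv : p.eval v = (v - c) ^ m * q.eval v := by
      rw [hq]; simp [hm]
    have : q.eval u * q.eval v < 0 := by
      rw [hevalu, hevalv] at hlt
      by_contra hge; push_neg at hge
      have h1 : 0 ≤ ((u - c) ^ m * (v - c) ^ m) * (q.eval u * q.eval v) :=
        mul_nonneg (mul_pos hu' hv').le hge
      nlinarith [h1]
    exact absurd (ih q hqN hqeven u hu v hv huv) (not_le.mpr this)

lemma no_sign_change (p : ℝ[X]) (a b : ℝ)
    (heven : ∀ z ∈ Ioo a b, Even (p.rootMultiplicity z)) :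
    ∀ u ∈ Icc a b, ∀ v ∈ Icc a b, 0 ≤ p.eval u * p.eval v := by
  intro u hu v hv
  rcases lt_trichotomy u v with h | rfl | h
  · exact no_sign_change_aux p.natDegree p le_rfl a b heven u hu v hv h
  · exact mul_self_nonneg _
  · rw [mul_comm]; exact no_sign_change_aux p.natDegree p le_rfl a b heven v hv u hu h
lemma roots_localize (r : ℕ) (q : ℝ[X]) (hmonic : q.Monic) (hdeg : q.natDegree = r)
    (T : Finset ℝ) (hT : r + 1 ≤ T.card) (a b : ℝ) (hTab : ∀ t ∈ T, t ∈ Icc a b)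
    (orth : ∀ p : ℝ[X], p.natDegree < r → ∑ t ∈ T, q.eval t * p.eval t = 0) :
    ∃ z : Fin r → ℝ, StrictMono z ∧ (∀ j, z j ∈ Icc a b) ∧ q = ∏ j, (X - C (z j)) := by
  classical
  have hq0 : q ≠ 0 := hmonic.ne_zero
  set Z : Finset ℝ := q.roots.toFinset.filter
    (fun z => z ∈ Ioo a b ∧ Odd (q.rootMultiplicity z)) with hZ
  have hZroots : Z ⊆ q.roots.toFinset := Finset.filter_subset _ _
  have hZcard : Z.card ≤ r := by
    calc Z.card ≤ q.roots.toFinset.card := Finset.card_le_card hZroots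
    _ ≤ Multiset.card q.roots := q.roots.toFinset_card_le
    _ ≤ q.natDegree := q.card_roots'
    _ = r := hdeg
  set w : ℝ[X] := ∏ z ∈ Z, (X - C z) with hw
  have hwne : ∀ z ∈ Z, (X - C z : ℝ[X]) ≠ 0 := fun z _ => X_sub_C_ne_zero z
  have hwdeg : w.natDegree = Z.card := by
    rw [hw, Polynomial.natDegree_prod _ _ hwne]
    simp [Polynomial.natDegree_X_sub_C]
  have hw0 : w ≠ 0 := Finset.prod_ne_zero_iff.mpr hwne
  -- Z.card = r
  have hZr : Z.card = r := by
    by_contra hne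
    have hslt : Z.card < r := lt_of_le_of_ne hZcard hne
    have hsum : ∑ t ∈ T, q.eval t * w.eval t = 0 := orth w (hwdeg ▸ hslt)
    -- even multiplicities of q*w on Ioo a b
    have hqw0 : q * w ≠ 0 := mul_ne_zero hq0 hw0
    have heven : ∀ z ∈ Ioo a b, Even ((q * w).rootMultiplicity z) := by
      intro z hz
      rw [Polynomial.rootMultiplicity_mul hqw0]
      by_cases hzZ : z ∈ Z
      · have hodd : Odd (q.rootMultiplicity z) := (Finset.mem_filter.mp hzZ).2.2
        have hwz : w.rootMultiplicity z = 1 := by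
          rw [hw, ← Finset.prod_erase_mul _ _ hzZ,
            Polynomial.rootMultiplicity_mul
              (mul_ne_zero (Finset.prod_ne_zero_iff.mpr (fun y hy => X_sub_C_ne_zero y))
                (X_sub_C_ne_zero z))]
          have h1 : Polynomial.rootMultiplicity z (∏ y ∈ Z.erase z, (X - C y : ℝ[X])) = 0 := by
            apply Polynomial.rootMultiplicity_eq_zero
            intro hroot
            have : ∏ y ∈ Z.erase z, (z - y) = 0 := by
              simpa [Polynomial.eval_prod] using hroot
            obtain ⟨y, hy, hy0⟩ := Finset.prod_eq_zero_iff.mp this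
            have : z = y := by linarith [sub_eq_zero.mp hy0]
            exact (Finset.mem_erase.mp hy).1 this.symm
          have h2 : Polynomial.rootMultiplicity z ((X - C z : ℝ[X])) = 1 := by
            simpa using Polynomial.rootMultiplicity_X_sub_C (x := z) (y := z)
          omega
        rw [hwz]
        exact Odd.add_one hodd
      · have hwz : w.rootMultiplicity z = 0 := by
          apply Polynomial.rootMultiplicity_eq_zero
          intro hroot
          have : ∏ y ∈ Z, (z - y) = 0 := by
            simpa [hw, Polynomial.eval_prod] using hroot
          obtain ⟨y, hy, hy0⟩ := Finset.prod_eq_zero_iff.mp this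
          have : z = y := by linarith [sub_eq_zero.mp hy0]
          subst this
          exact hzZ hy
        rw [hwz, add_zero]
        by_cases hroot : q.eval z = 0
        · rcases Nat.even_or_odd (q.rootMultiplicity z) with he | ho
          · exact he
          · exact absurd (Finset.mem_filter.mpr ⟨Multiset.mem_toFinset.mpr
              ((Polynomial.mem_roots hq0).mpr hroot), hz, ho⟩) hzZ
        · rw [Polynomial.rootMultiplicity_eq_zero hroot]
          exact Even.zero
    have hpair := no_sign_change (q * w) a b heven
    -- all terms vanish
    have hterms : ∀ t ∈ T, q.eval t * w.eval t = 0 := by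
      intro t ht
      by_contra h0
      set e : ℝ → ℝ := fun u => (q * w).eval u with he
      have het : e t ≠ 0 := by simpa [he] using h0
      rcases lt_or_gt_of_ne het with hneg | hpos
      · have hnonpos : ∀ u ∈ T, e u ≤ 0 := by
          intro u hu
          have := hpair u (hTab u hu) t (hTab t ht)
          nlinarith
        have : ∀ u ∈ T, (0:ℝ) ≤ -e u := fun u hu => by linarith [hnonpos u hu]
        have hsum' : ∑ u ∈ T, -e u = 0 := by
          have : ∑ u ∈ T, e u = 0 := by
            simp only [he, Polynomial.eval_mul]; exact hsum
          rw [Finset.sum_neg_distrib, this, neg_zero]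
        have := (Finset.sum_eq_zero_iff_of_nonneg this).mp hsum' t ht
        simp only [neg_eq_zero] at this
        exact het this
      · have hnonneg : ∀ u ∈ T, 0 ≤ e u := by
          intro u hu
          have := hpair u (hTab u hu) t (hTab t ht)
          nlinarith
        have hsum' : ∑ u ∈ T, e u = 0 := by
          simp only [he, Polynomial.eval_mul]
          exact hsum
        have := (Finset.sum_eq_zero_iff_of_nonneg hnonneg).mp hsum' t ht
        exact het this
    have hqt : ∀ t ∈ T, q.eval t = 0 := by
      intro t ht
      rcases mul_eq_zero.mp (hterms t ht) with h | h
      · exact h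
      · -- w.eval t = 0 means t ∈ Z ⊆ roots of q
        rw [hw, Polynomial.eval_prod] at h
        obtain ⟨y, hy, hy0⟩ := Finset.prod_eq_zero_iff.mp h
        simp only [Polynomial.eval_sub, Polynomial.eval_X, Polynomial.eval_C] at hy0
        have : t = y := by linarith [sub_eq_zero.mp hy0]
        subst this
        exact (Polynomial.mem_roots hq0).mp (Multiset.mem_toFinset.mp (hZroots hy))
    have hTsub : T ⊆ q.roots.toFinset := fun t ht =>
      Multiset.mem_toFinset.mpr ((Polynomial.mem_roots hq0).mpr (hqt t ht))
    have : T.card ≤ r := le_trans (Finset.card_le_card hTsub)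
      (le_trans q.roots.toFinset_card_le (hdeg ▸ q.card_roots'))
    omega
  -- now q has exactly the r simple roots Z
  have hrc : Multiset.card q.roots = r := by
    have h1 : r ≤ q.roots.toFinset.card := hZr ▸ Finset.card_le_card hZroots
    have h2 : q.roots.toFinset.card ≤ Multiset.card q.roots := q.roots.toFinset_card_le
    have h3 : Multiset.card q.roots ≤ r := hdeg ▸ q.card_roots'
    omega
  have hZeq : Z = q.roots.toFinset := by
    apply Finset.eq_of_subset_of_card_le hZroots
    calc q.roots.toFinset.card ≤ Multiset.card q.roots := q.roots.toFinset_card_le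
      _ = r := hrc
      _ = Z.card := hZr.symm
  have hnodup : q.roots.Nodup := by
    have : q.roots.toFinset.card = Multiset.card q.roots := by
      rw [← hZeq, hZr, hrc]
    exact Multiset.toFinset_card_eq_card_iff_nodup.mp this
  have hrootsval : Z.val = q.roots := by
    rw [hZeq, Multiset.toFinset_val, Multiset.dedup_eq_self.mpr hnodup]
  have hqprod : q = ∏ z ∈ Z, (X - C z) := by
    have := Polynomial.prod_multiset_X_sub_C_of_monic_of_roots_card_eq hmonic (hrc.trans hdeg.symm)
    rw [← this, ← hrootsval]
    rfl
  -- enumerate Z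
  have e := Z.orderIsoOfFin hZr
  refine ⟨fun j => (e j : ℝ), ?_, ?_, ?_⟩
  · intro i j hij
    exact (Subtype.coe_lt_coe.mpr (e.strictMono hij))
  · intro j
    have hmem : ((e j : ℝ)) ∈ Z := (e j).2
    have := (Finset.mem_filter.mp hmem).2.1
    exact Ioo_subset_Icc_self this
  · rw [hqprod, ← Finset.prod_coe_sort Z (fun z => (X - C z : ℝ[X]))]
    exact (Fintype.prod_equiv e.toEquiv _ _ (fun j => rfl)).symm
lemma iterated_rolle (r : ℕ) (g : ℝ → ℝ)
    (hdiff : ∀ k < r, DifferentiableOn ℝ (iteratedDerivWithin k g (Icc (0:ℝ) 1)) (Icc (0:ℝ) 1))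
    (P : ℝ[X]) (t : ℕ → ℝ) (ht : ∀ i j, i < j → j ≤ r → t i < t j)
    (h01 : ∀ j ≤ r, t j ∈ Icc (0:ℝ) 1)
    (hzero : ∀ j ≤ r, g (t j) = P.eval (t j)) :
    ∃ ξ ∈ Icc (t 0) (t r),
      iteratedDerivWithin r g (Icc (0:ℝ) 1) ξ = ((⇑Polynomial.derivative)^[r] P).eval ξ := by
  classical
  set s : Set ℝ := Icc (0:ℝ) 1 with hs
  have huniq : UniqueDiffOn ℝ s := uniqueDiffOn_Icc zero_lt_one
  have key : ∀ k, k ≤ r → ∃ u : ℕ → ℝ,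
      (∀ i j, i < j → j ≤ r - k → u i < u j) ∧
      (∀ j ≤ r - k, u j ∈ Icc (t 0) (t r)) ∧
      (∀ j ≤ r - k, iteratedDerivWithin k g s (u j) = ((⇑Polynomial.derivative)^[k] P).eval (u j)) := by
    intro k hk
    induction k with
    | zero =>
      refine ⟨t, by simpa using ht, ?_, ?_⟩
      · intro j hj
        simp only [Nat.sub_zero] at hj
        constructor
        · rcases Nat.eq_zero_or_pos j with rfl | hj0
          · exact le_rfl
          · exact (ht 0 j hj0 hj).le
        · rcases Nat.lt_or_ge j r with hj0 | hj0
          · exact (ht j r hj0 le_rfl).le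
          · have : j = r := le_antisymm hj hj0
            subst this; exact le_rfl
      · intro j hj
        simp only [Nat.sub_zero] at hj
        simpa [iteratedDerivWithin_zero] using hzero j hj
    | succ k ih =>
      have hkr : k < r := hk
      obtain ⟨u, humono, humem, hueq⟩ := ih hkr.le
      have hstep : ∀ j, j ≤ r - (k+1) → ∃ c,
          c ∈ Ioo (u j) (u (j+1)) ∧
          iteratedDerivWithin (k+1) g s c = ((⇑Polynomial.derivative)^[k+1] P).eval c := by
        intro j hj
        have hj1 : j + 1 ≤ r - k := by omega
        have hult : u j < u (j+1) := humono j (j+1) (Nat.lt_succ_self j) hj1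
        have hmemj := humem j (by omega)
        have hmemj1 := humem (j+1) hj1
        have h0j : t 0 ∈ s := h01 0 (Nat.zero_le r)
        have hrj : t r ∈ s := h01 r le_rfl
        have hsubs : Icc (u j) (u (j+1)) ⊆ s := by
          intro y hy
          exact ⟨le_trans h0j.1 (le_trans hmemj.1 hy.1), le_trans hy.2 (le_trans hmemj1.2 hrj.2)⟩
        set φ : ℝ → ℝ := fun y =>
          iteratedDerivWithin k g s y - ((⇑Polynomial.derivative)^[k] P).eval y with hφ
        have hφj : φ (u j) = 0 := by
          rw [hφ]; simp only [sub_eq_zero]; exact hueq j (by omega)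
        have hφj1 : φ (u (j+1)) = 0 := by
          rw [hφ]; simp only [sub_eq_zero]; exact hueq (j+1) hj1
        have hcont : ContinuousOn φ (Icc (u j) (u (j+1))) := by
          apply ContinuousOn.sub
          · exact ((hdiff k hkr).continuousOn).mono hsubs
          · exact (Polynomial.continuous _).continuousOn
        obtain ⟨c, hc, hc0⟩ := exists_deriv_eq_zero hult hcont (hφj.trans hφj1.symm)
        have hcs : s ∈ nhds c := by
          apply Icc_mem_nhds
          · exact lt_of_le_of_lt (le_trans h0j.1 hmemj.1) hc.1
          · exact lt_of_lt_of_le hc.2 (le_trans hmemj1.2 hrj.2)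
        have hA : DifferentiableAt ℝ (iteratedDerivWithin k g s) c :=
          (hdiff k hkr).differentiableAt hcs
        have hB : DifferentiableAt ℝ (fun y => ((⇑Polynomial.derivative)^[k] P).eval y) c :=
          (Polynomial.differentiable _).differentiableAt
        have hderiv : deriv φ c =
            deriv (iteratedDerivWithin k g s) c -
            deriv (fun y => ((⇑Polynomial.derivative)^[k] P).eval y) c := by
          rw [hφ]; exact deriv_sub hA hB
        have h1 : deriv (iteratedDerivWithin k g s) c = iteratedDerivWithin (k+1) g s c := by
          rw [← derivWithin_of_mem_nhds hcs,
            ← iteratedDerivWithin_succ]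
        have h2 : deriv (fun y => ((⇑Polynomial.derivative)^[k] P).eval y) c =
            ((⇑Polynomial.derivative)^[k+1] P).eval c := by
          rw [Polynomial.deriv, Function.iterate_succ_apply']
        refine ⟨c, hc, ?_⟩
        rw [hderiv, h1, h2] at hc0
        linarith
      choose! c hcmem hceq using hstep
      refine ⟨c, ?_, ?_, ?_⟩
      · intro i j hij hj
        have hi : i ≤ r - (k+1) := le_trans (le_of_lt hij) hj
        have h1 : c i < u (i+1) := (hcmem i hi).2
        have h2 : u j < c j := (hcmem j hj).1
        have h3 : u (i+1) ≤ u j := by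
          rcases Nat.lt_or_ge (i+1) j with h | h
          · exact (humono (i+1) j h (by omega)).le
          · have : i + 1 = j := by omega
            subst this; exact le_rfl
        linarith
      · intro j hj
        have h1 := (hcmem j hj).1
        have h2 := (hcmem j hj).2
        have hm0 := humem j (by omega)
        have hm1 := humem (j+1) (by omega)
        exact ⟨le_trans hm0.1 h1.le, le_trans h2.le hm1.2⟩
      · intro j hj
        exact hceq j hj
  obtain ⟨u, _, humem, hueq⟩ := key r le_rfl
  exact ⟨u 0, humem 0 (by omega), hueq 0 (by omega)⟩

open scoped RealInnerProductSpace

set_option maxHeartbeats 1000000 in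
/-- The deterministic inequality underlying condition (24) in the first part of
Proposition 3: with `Λ(F) = (RF)^{(r)}`, for any uniform bound `W` on the oscillation of
`Λ(F)` at scale `h_J`,
`⟨f, t_J*⟩ ≥ −(min_{i ∈ J} Λ(F)(x_i) + W) · ‖x_J^r − Π_{X_J} x_J^r‖² / (r! γ_J)`. -/
theorem inner_tJ_ge_of_oscillation_bound
    (n r : ℕ) (hr : 1 ≤ r) (x : Fin n → ℝ) (hx : StrictMono x)
    (hx01 : ∀ i, x i ∈ Set.Icc (0 : ℝ) 1)
    (R F : ℝ → ℝ) (hR : ∀ y ∈ Set.Icc (0 : ℝ) 1, R y ≠ 0)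
    (hdiff : ∀ k < r, DifferentiableOn ℝ
      (iteratedDerivWithin k (fun y => R y * F y) (Set.Icc (0 : ℝ) 1)) (Set.Icc (0 : ℝ) 1))
    (Lam : ℝ → ℝ) (hLam : Lam = iteratedDerivWithin r (fun y => R y * F y) (Set.Icc (0 : ℝ) 1))
    (J : Finset (Fin n)) (hJne : J.Nonempty) (hJcard : r + 1 ≤ J.card)
    (hJconsec : ∀ i ∈ J, ∀ j ∈ J, ∀ k : Fin n, i ≤ k → k ≤ j → k ∈ J)
    (hJ : ℝ) (hhJ : hJ = J.sup' hJne x - J.inf' hJne x)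
    (xJ : ℕ → EuclideanSpace ℝ (Fin n))
    (hxJ : ∀ l i, xJ l i = if i ∈ J then x i ^ l else 0)
    (XJ : Submodule ℝ (EuclideanSpace ℝ (Fin n)))
    (hXJ : XJ = Submodule.span ℝ (Set.range fun l : Fin r => xJ (l : ℕ)))
    (Rst : (Fin n → ℝ) → EuclideanSpace ℝ (Fin n))
    (hRst : ∀ w i, Rst w i = R (x i) * w i)
    (γJ : ℝ)
    (hγJ : γJ = ‖Rst fun i =>
      (xJ r - (XJ.orthogonalProjectionOnto (xJ r) : EuclideanSpace ℝ (Fin n))) i‖)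
    (tJ : EuclideanSpace ℝ (Fin n))
    (htJ : tJ = -(γJ⁻¹ • Rst fun i =>
      (xJ r - (XJ.orthogonalProjectionOnto (xJ r) : EuclideanSpace ℝ (Fin n))) i))
    (f : EuclideanSpace ℝ (Fin n)) (hf : ∀ i, f i = F (x i)) :
    ∀ W : ℝ, (∀ y ∈ Set.Icc (0 : ℝ) 1, ∀ z ∈ Set.Icc (0 : ℝ) 1,
        |y - z| ≤ hJ → |Lam y - Lam z| ≤ W) →
      -((J.inf' hJne fun i => Lam (x i)) + W) *
          ‖xJ r - (XJ.orthogonalProjectionOnto (xJ r) : EuclideanSpace ℝ (Fin n))‖ ^ 2 /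
            ((r.factorial : ℝ) * γJ)
        ≤ ⟪f, tJ⟫ := by
  classical
  intro W hW
  set g : ℝ → ℝ := fun y => R y * F y with hg
  set d : EuclideanSpace ℝ (Fin n) :=
    xJ r - (XJ.orthogonalProjectionOnto (xJ r) : EuclideanSpace ℝ (Fin n)) with hd
  -- d vanishes off J
  have hXJvanish : ∀ v ∈ XJ, ∀ i ∉ J, v i = 0 := by
    intro v hv i hi
    rw [hXJ] at hv
    induction hv using Submodule.span_induction with
    | mem v hv =>
      obtain ⟨l, rfl⟩ := hv
      show xJ (l : ℕ) i = 0
      rw [hxJ]; simp [hi]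
    | zero => rfl
    | add v w _ _ hv hw => show v i + w i = 0; rw [hv, hw, add_zero]
    | smul c v _ hv => show c * v i = 0; rw [hv, mul_zero]
  have hproj_mem : (XJ.orthogonalProjectionOnto (xJ r) : EuclideanSpace ℝ (Fin n)) ∈ XJ :=
    (XJ.orthogonalProjectionOnto (xJ r)).2
  have hd0 : ∀ i ∉ J, d i = 0 := by
    intro i hi
    have h1 : xJ r i = 0 := by rw [hxJ]; simp [hi]
    have h2 : (XJ.orthogonalProjectionOnto (xJ r) : EuclideanSpace ℝ (Fin n)) i = 0 :=
      hXJvanish _ hproj_mem i hi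
    show xJ r i - _ = 0
    rw [h1, zero_sub, neg_eq_zero]; exact h2
  -- orthogonality
  have hdo : d ∈ XJᗮ := Submodule.sub_starProjection_mem_orthogonal (K := XJ) _
  have hinner : ∀ v : EuclideanSpace ℝ (Fin n), ⟪v, d⟫ = ∑ i, v i * d i := by
    intro v
    rw [PiLp.inner_apply]
    simp [RCLike.inner_apply, conj_trivial]
    exact Finset.sum_congr rfl (fun i _ => mul_comm _ _)
  have horth_mono : ∀ l < r, ∑ i ∈ J, x i ^ l * d i = 0 := by
    intro l hl
    have hmem : xJ l ∈ XJ := by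
      rw [hXJ]
      exact Submodule.subset_span ⟨⟨l, hl⟩, rfl⟩
    have h0 : ⟪xJ l, d⟫ = 0 := (Submodule.mem_orthogonal XJ d).mp hdo _ hmem
    rw [hinner] at h0
    rw [← h0]
    rw [← Finset.sum_subset (Finset.subset_univ J)]
    · apply Finset.sum_congr rfl
      intro i hi
      rw [hxJ]; simp [hi]
    · intro i _ hi
      rw [hd0 i hi, mul_zero]
  have horth_poly : ∀ p : Polynomial ℝ, p.natDegree < r → ∑ i ∈ J, p.eval (x i) * d i = 0 := by
    intro p hp
    have : ∀ i ∈ J, p.eval (x i) * d i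
        = ∑ k ∈ Finset.range (p.natDegree + 1), p.coeff k * x i ^ k * d i := by
      intro i _
      rw [Polynomial.eval_eq_sum_range, Finset.sum_mul]
    rw [Finset.sum_congr rfl this, Finset.sum_comm]
    apply Finset.sum_eq_zero
    intro k hk
    have hkr : k < r := lt_of_lt_of_le (Finset.mem_range.mp hk) hp
    calc ∑ i ∈ J, p.coeff k * x i ^ k * d i
        = p.coeff k * ∑ i ∈ J, x i ^ k * d i := by
          rw [Finset.mul_sum]; apply Finset.sum_congr rfl; intro i _; ring
      _ = 0 := by rw [horth_mono k hkr, mul_zero]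
  -- ‖d‖² and the r-th moment
  have hnormd : ‖d‖ ^ 2 = ∑ i ∈ J, d i ^ 2 := by
    rw [← real_inner_self_eq_norm_sq, hinner]
    rw [← Finset.sum_subset (Finset.subset_univ J)]
    · apply Finset.sum_congr rfl; intro i _; ring
    · intro i _ hi; rw [hd0 i hi, mul_zero]
  have hmoment : ∑ i ∈ J, x i ^ r * d i = ‖d‖ ^ 2 := by
    have hsplit : ⟪xJ r, d⟫ = ⟪d, d⟫ + ⟪(XJ.orthogonalProjectionOnto (xJ r) :
        EuclideanSpace ℝ (Fin n)), d⟫ := by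
      rw [← inner_add_left]
      congr 1
      rw [hd]; abel
    have hz : ⟪(XJ.orthogonalProjectionOnto (xJ r) : EuclideanSpace ℝ (Fin n)), d⟫ = 0 :=
      (Submodule.mem_orthogonal XJ d).mp hdo _ hproj_mem
    have h1 : ⟪xJ r, d⟫ = ‖d‖ ^ 2 := by
      rw [hsplit, hz, add_zero, real_inner_self_eq_norm_sq]
    rw [← h1, hinner]
    rw [← Finset.sum_subset (Finset.subset_univ J)]
    · apply Finset.sum_congr rfl
      intro i hi
      rw [hxJ]; simp [hi]
    · intro i _ hi
      rw [hd0 i hi, mul_zero]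
  -- inner product with tJ
  set S : ℝ := ∑ i ∈ J, g (x i) * d i with hS
  have hinner2 : ∀ u v : EuclideanSpace ℝ (Fin n), ⟪u, v⟫ = ∑ i, u i * v i := by
    intro u v
    rw [PiLp.inner_apply]
    simp [RCLike.inner_apply, conj_trivial]
    exact Finset.sum_congr rfl (fun i _ => mul_comm _ _)
  have hinner_ftJ : ⟪f, tJ⟫ = -(γJ⁻¹ * S) := by
    rw [htJ, hinner2]
    have hterm : ∀ i : Fin n,
        f i * (-(γJ⁻¹ • Rst fun i => d i)) i = -(γJ⁻¹ * (g (x i) * d i)) := by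
      intro i
      have h1 : (-(γJ⁻¹ • Rst fun i => d i)) i = -(γJ⁻¹ * (R (x i) * d i)) := by
        show -((γJ⁻¹ • Rst fun i => d i) i) = _
        have : (γJ⁻¹ • Rst fun i => d i) i = γJ⁻¹ * (Rst fun i => d i) i := rfl
        rw [this, hRst]
      rw [h1, hf, hg]
      ring
    rw [Finset.sum_congr rfl (fun i _ => hterm i)]
    rw [Finset.sum_neg_distrib, ← Finset.mul_sum]
    have : ∑ i : Fin n, g (x i) * d i = S := by
      rw [hS]
      rw [← Finset.sum_subset (Finset.subset_univ J)]
      intro i _ hi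
      rw [hd0 i hi, mul_zero]
    rw [this]
  -- trivial case γJ = 0
  have hγ0 : 0 ≤ γJ := hγJ ▸ norm_nonneg _
  rcases eq_or_lt_of_le hγ0 with hγz | hγpos
  · rw [← hγz, mul_zero, div_zero, hinner_ftJ, ← hγz]
    simp
  -- main case
  have hγne : γJ ≠ 0 := ne_of_gt hγpos
  have hrfacpos : (0:ℝ) < (r.factorial : ℝ) := by positivity
  set m : ℝ := J.inf' hJne fun i => Lam (x i) with hm
  suffices hcore : (r.factorial : ℝ) * S ≤ (m + W) * ‖d‖ ^ 2 by
    rw [hinner_ftJ, div_le_iff₀ (by positivity)]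
    have heq : -(γJ⁻¹ * S) * ((r.factorial : ℝ) * γJ) = -((r.factorial : ℝ) * S) := by
      field_simp
    rw [heq]
    linarith
  -- representation of the projection, construction of q
  obtain ⟨a, ha⟩ : ∃ a : Fin r → ℝ, ∑ l : Fin r, a l • xJ (l : ℕ) =
      (XJ.orthogonalProjectionOnto (xJ r) : EuclideanSpace ℝ (Fin n)) :=
    (Submodule.mem_span_range_iff_exists_fun ℝ).mp (by rw [← hXJ]; exact hproj_mem)
  have hdi_eval : ∀ i ∈ J, d i = x i ^ r - ∑ l : Fin r, a l * x i ^ (l : ℕ) := by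
    intro i hi
    show xJ r i - (XJ.orthogonalProjectionOnto (xJ r) : EuclideanSpace ℝ (Fin n)) i = _
    rw [← ha, WithLp.ofLp_sum, Finset.sum_apply i Finset.univ, hxJ r i, if_pos hi]
    congr 1
    apply Finset.sum_congr rfl
    intro l _
    show a l * xJ (l : ℕ) i = _
    rw [hxJ, if_pos hi]
  set low : Polynomial ℝ := ∑ l : Fin r, Polynomial.C (a l) * Polynomial.X ^ (l : ℕ) with hlow
  set q : Polynomial ℝ := Polynomial.X ^ r - low with hqdef
  have hlowdeg : low.degree < (r : WithBot ℕ) := by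
    apply lt_of_le_of_lt (Polynomial.degree_sum_le _ _)
    rw [Finset.sup_lt_iff (by exact_mod_cast WithBot.bot_lt_coe r)]
    intro l _
    apply lt_of_le_of_lt (Polynomial.degree_C_mul_X_pow_le _ _)
    exact_mod_cast Nat.cast_lt.mpr l.2
  have hqmonic : q.Monic := Polynomial.monic_X_pow_sub (by exact_mod_cast hlowdeg)
  have hqdeg : q.natDegree = r := by
    apply Polynomial.natDegree_eq_of_degree_eq_some
    rw [hqdef, Polynomial.degree_sub_eq_left_of_degree_lt, Polynomial.degree_X_pow]
    rw [Polynomial.degree_X_pow]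
    exact_mod_cast hlowdeg
  have hq_eval : ∀ i ∈ J, q.eval (x i) = d i := by
    intro i hi
    rw [hdi_eval i hi, hqdef, Polynomial.eval_sub, Polynomial.eval_pow, Polynomial.eval_X,
      hlow, Polynomial.eval_finset_sum]
    congr 1
    apply Finset.sum_congr rfl
    intro l _
    simp
  -- transfer orthogonality to the image finset T
  set T : Finset ℝ := J.image x with hT
  have hinjJ : ∀ i ∈ J, ∀ j ∈ J, x i = x j → i = j := fun i _ j _ h => hx.injective h
  have hTcard : T.card = J.card := Finset.card_image_of_injOn (fun i _ j _ h => hx.injective h)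
  set a0 : ℝ := J.inf' hJne x with ha0
  set b0 : ℝ := J.sup' hJne x with hb0
  have hTab : ∀ t ∈ T, t ∈ Set.Icc a0 b0 := by
    intro t ht
    obtain ⟨i, hi, rfl⟩ := Finset.mem_image.mp ht
    exact ⟨Finset.inf'_le x hi, Finset.le_sup' x hi⟩
  have horthT : ∀ p : Polynomial ℝ, p.natDegree < r → ∑ t ∈ T, q.eval t * p.eval t = 0 := by
    intro p hp
    rw [hT, Finset.sum_image hinjJ]
    rw [← horth_poly p hp]
    apply Finset.sum_congr rfl
    intro i hi
    rw [hq_eval i hi]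
    ring
  obtain ⟨z, hzmono, hzmem, hq_prod⟩ :=
    roots_localize r q hqmonic hqdeg T (hTcard ▸ hJcard) a0 b0 hTab horthT
  -- bounds on the hull
  obtain ⟨imin, himin, himineq⟩ := Finset.exists_mem_eq_inf' hJne x
  obtain ⟨imax, himax, himaxeq⟩ := Finset.exists_mem_eq_sup' hJne x
  have ha0_mem : a0 ∈ Set.Icc (0:ℝ) 1 := by rw [ha0, himineq]; exact hx01 imin
  have hb0_mem : b0 ∈ Set.Icc (0:ℝ) 1 := by rw [hb0, himaxeq]; exact hx01 imax
  have hIccsub : Set.Icc a0 b0 ⊆ Set.Icc (0:ℝ) 1 := by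
    intro y hy
    exact ⟨le_trans ha0_mem.1 hy.1, le_trans hy.2 hb0_mem.2⟩
  obtain ⟨istar, histar, hmistar⟩ := Finset.exists_mem_eq_inf' hJne (fun i => Lam (x i))
  -- the degree-(r-1) interpolant H at the roots of q
  set Zs : Finset ℝ := Finset.image z Finset.univ with hZs
  have hZscard : Zs.card = r := by
    rw [hZs, Finset.card_image_of_injective _ hzmono.injective, Finset.card_univ,
      Fintype.card_fin]
  set H : Polynomial ℝ := Lagrange.interpolate Zs id g with hH
  have hHdeglt : H.degree < (r : WithBot ℕ) := by
    have := Lagrange.degree_interpolate_lt g (Set.injOn_id (↑Zs : Set ℝ))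
    rwa [hZscard] at this
  have hHnd : H.natDegree < r := by
    by_cases hH0 : H = 0
    · rw [hH0]; simp; omega
    · exact (Polynomial.natDegree_lt_iff_degree_lt hH0).mpr hHdeglt
  have hHsum : ∑ i ∈ J, H.eval (x i) * d i = 0 := horth_poly H hHnd
  -- pointwise bound
  have hpt : ∀ i ∈ J, g (x i) * d i - H.eval (x i) * d i
      ≤ (m + W) / (r.factorial : ℝ) * d i ^ 2 := by
    intro i hi
    by_cases hdi : d i = 0
    · rw [hdi]; simp
    · have hqxi : q.eval (x i) ≠ 0 := by rw [hq_eval i hi]; exact hdi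
      have hxnotz : ∀ j, x i ≠ z j := by
        intro j hjeq
        apply hqxi
        rw [hq_prod, Polynomial.eval_prod]
        apply Finset.prod_eq_zero (Finset.mem_univ j)
        simp [hjeq]
      have hxiZs : x i ∉ Zs := by
        rw [hZs]
        intro hmem
        obtain ⟨j, _, hje⟩ := Finset.mem_image.mp hmem
        exact hxnotz j hje.symm
      set Ti : Finset ℝ := insert (x i) Zs with hTi
      have hTicard : Ti.card = r + 1 := by
        rw [hTi, Finset.card_insert_of_notMem hxiZs, hZscard]
      have hTiIcc : ∀ y ∈ Ti, y ∈ Set.Icc a0 b0 := by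
        intro y hy
        rcases Finset.mem_insert.mp hy with rfl | hy
        · exact ⟨Finset.inf'_le x hi, Finset.le_sup' x hi⟩
        · obtain ⟨j, _, rfl⟩ := Finset.mem_image.mp hy
          exact hzmem j
      set e := Ti.orderIsoOfFin hTicard with he
      set t : ℕ → ℝ := fun j => (e ⟨min j r, by omega⟩ : ℝ) with ht
      have htmem : ∀ j, t j ∈ Ti := fun j => (e ⟨min j r, by omega⟩).2
      have htmono : ∀ i' j', i' < j' → j' ≤ r → t i' < t j' := by
        intro i' j' hij hjr
        rw [ht]
        have : (⟨min i' r, by omega⟩ : Fin (r+1)) < ⟨min j' r, by omega⟩ := by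
          simp only [Fin.mk_lt_mk]
          omega
        exact e.strictMono this
      have h01' : ∀ j ≤ r, t j ∈ Set.Icc (0:ℝ) 1 := fun j _ =>
        hIccsub (hTiIcc _ (htmem j))
      set P : Polynomial ℝ := Lagrange.interpolate Ti id g with hP
      have hzeroP : ∀ j ≤ r, g (t j) = P.eval (t j) := by
        intro j _
        exact (Lagrange.eval_interpolate_at_node g (Set.injOn_id _) (htmem j)).symm
      obtain ⟨ξ, hξmem, hξeq⟩ := iterated_rolle r g hdiff P t htmono h01' hzeroP
      have hξIcc : ξ ∈ Set.Icc a0 b0 := by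
        have h1 := hTiIcc _ (htmem 0)
        have h2 := hTiIcc _ (htmem r)
        exact ⟨le_trans h1.1 hξmem.1, le_trans hξmem.2 h2.2⟩
      have hξ01 : ξ ∈ Set.Icc (0:ℝ) 1 := hIccsub hξIcc
      have hLamle : Lam ξ ≤ m + W := by
        have habs : |ξ - x istar| ≤ hJ := by
          rw [hhJ]
          have h1 : x istar ∈ Set.Icc a0 b0 := ⟨Finset.inf'_le x histar, Finset.le_sup' x histar⟩
          rw [abs_le]
          constructor
          · have h2 := hξIcc.1; have h3 := h1.2; linarith
          · have h2 := hξIcc.2; have h3 := h1.1; linarith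
        have := hW ξ hξ01 (x istar) (hx01 istar) habs
        have hmeq : Lam (x istar) = m := hmistar.symm
        rw [abs_le] at this
        linarith [this.2]
      set c : ℝ := P.coeff r with hc
      have hPnd : P.natDegree ≤ r := by
        by_cases hP0 : P = 0
        · rw [hP0]; simp
        · have := Lagrange.degree_interpolate_lt g (Set.injOn_id (↑Ti : Set ℝ))
          rw [hTicard] at this
          have := (Polynomial.natDegree_lt_iff_degree_lt hP0).mpr (by exact_mod_cast this)
          omega
      have hiter : Polynomial.eval ξ ((⇑Polynomial.derivative)^[r] P)
          = (r.factorial : ℝ) * c := by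
        have hnd : ((⇑Polynomial.derivative)^[r] P).natDegree = 0 := by
          have := Polynomial.natDegree_iterate_derivative P r
          omega
        rw [Polynomial.eq_C_of_natDegree_le_zero hnd.le, Polynomial.eval_C,
          Polynomial.coeff_iterate_derivative, zero_add, Nat.descFactorial_self,
          nsmul_eq_mul]
      have hLamxi : Lam ξ = (r.factorial : ℝ) * c := by
        rw [hLam]
        rw [hξeq, hiter]
      have hqcoeff : q.coeff r = 1 := by
        have := hqmonic.coeff_natDegree
        rwa [hqdeg] at this
      have hPq : P - Polynomial.C c * q = H := by
        apply Lagrange.eq_interpolate_of_eval_eq g (Set.injOn_id _)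
        · rw [hZscard]
          rw [Polynomial.degree_lt_iff_coeff_zero]
          intro mm hmm
          rw [Polynomial.coeff_sub, Polynomial.coeff_C_mul]
          rcases eq_or_lt_of_le hmm with rfl | hlt
          · rw [hqcoeff, mul_one, ← hc, sub_self]
          · rw [Polynomial.coeff_eq_zero_of_natDegree_lt (by omega),
              Polynomial.coeff_eq_zero_of_natDegree_lt (by omega), mul_zero, sub_zero]
        · intro y hy
          have hyTi : y ∈ Ti := Finset.mem_insert_of_mem hy
          have hqy : q.eval y = 0 := by
            obtain ⟨j, _, rfl⟩ := Finset.mem_image.mp hy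
            rw [hq_prod, Polynomial.eval_prod]
            apply Finset.prod_eq_zero (Finset.mem_univ j)
            simp
          simp only [id_eq, Polynomial.eval_sub, Polynomial.eval_mul, Polynomial.eval_C, hqy,
            mul_zero, sub_zero]
          exact Lagrange.eval_interpolate_at_node g (Set.injOn_id _) hyTi
      have hgxi : g (x i) = H.eval (x i) + c * d i := by
        have h1 : g (x i) = P.eval (x i) := by
          exact (Lagrange.eval_interpolate_at_node g (Set.injOn_id _)
            (Finset.mem_insert_self _ _)).symm
        have h2 : P.eval (x i) = (P - Polynomial.C c * q).eval (x i) + c * q.eval (x i) := by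
          simp only [Polynomial.eval_sub, Polynomial.eval_mul, Polynomial.eval_C]
          ring
        rw [h1, h2, hPq, hq_eval i hi]
      have hcle : c ≤ (m + W) / (r.factorial : ℝ) := by
        rw [le_div_iff₀ hrfacpos]
        nlinarith [hLamle, hLamxi]
      have : g (x i) * d i - H.eval (x i) * d i = c * d i ^ 2 := by
        rw [hgxi]; ring
      rw [this]
      exact mul_le_mul_of_nonneg_right hcle (sq_nonneg _)
  -- summation
  have hsum_le := Finset.sum_le_sum hpt
  rw [Finset.sum_sub_distrib, hHsum, sub_zero, ← Finset.mul_sum, ← hS, ← hnormd] at hsum_le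
  rw [div_mul_eq_mul_div, le_div_iff₀ hrfacpos] at hsum_le
  linarith [hsum_le]
end
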